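/- arXiv:1307.6242 — 7 statements merged into one kernel-verified Lean document; each statement's English description precedes it below -/
import Mathlib

section
/- For any countable field K, there exists a sequence (F_N) of non-empty finite subsets of K such that for every x in K with x ≠ 0, |F_N ∩ (F_N + x)|/|F_N| → 1 and |F_N ∩ (x·F_N)|/|F_N| → 1 as N → ∞ (a double Følner sequence). -/
open Filter

/-- `F` is a double Følner sequence in the field `K`: a sequence of non-empty finite
subsets that is asymptotically invariant under translation by any `x ∈ K` and under
multiplication by any nonzero `x ∈ K`. -/
def IsDoubleFolner {K : Type*} [Field K] [DecidableEq K] (F : ℕ → Finset K) : Prop :=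
  (∀ N, (F N).Nonempty) ∧
  ∀ x : K, x ≠ 0 →
    Tendsto (fun N => ((F N ∩ (F N).image (· + x)).card : ℝ) / (F N).card) atTop (nhds 1) ∧
    Tendsto (fun N => ((F N ∩ (F N).image (x * ·)).card : ℝ) / (F N).card) atTop (nhds 1)

/-!
Every abelian group has Følner sets: a finitely generated one is `ℤⁿ × D` with `D` finite, and
large cubes times `D` are almost invariant. Take `T ⊆ Kˣ` almost invariant under multiplication
by the given elements `x`, and `A ⊆ K` almost invariant under translation by all `x / t`, `t ∈ T`.
For generic `c` the product map `T × (A + c) → K` is injective, and `F = T * (A + c)` works: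
multiplication by `x` only moves the factor `T`, while translation by `x` acts on the fibre
`t * (A + c)` as translation of `A + c` by `x / t`.
-/

open Finset Function
open scoped Pointwise

section AlmostInvariant

variable {α β : Type*} [DecidableEq α] [DecidableEq β]

def IsAlmostInvariant (ε : ℝ) (f : α → α) (T : Finset α) : Prop :=
  (1 - ε) * #T ≤ #(T ∩ T.image f)

lemma card_inter_image_of_semiconj {ρ : α → β} (hρ : Injective ρ) {f : α → α} {g : β → β}
    (h : Semiconj ρ f g) (T : Finset α) :
    #(T.image ρ ∩ (T.image ρ).image g) = #(T ∩ T.image f) := by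
  rw [image_image, ← h.comp_eq, ← image_image, ← image_inter _ _ hρ, card_image_of_injective _ hρ]

lemma IsAlmostInvariant.image {ε : ℝ} {f : α → α} {T : Finset α} (hT : IsAlmostInvariant ε f T)
    {ρ : α → β} (hρ : Injective ρ) {g : β → β} (h : Semiconj ρ f g) :
    IsAlmostInvariant ε g (T.image ρ) := by
  rwa [IsAlmostInvariant, card_inter_image_of_semiconj hρ h, card_image_of_injective _ hρ]

lemma IsAlmostInvariant.prod_univ [Fintype β] {ε : ℝ} {f : α → α} {T : Finset α}
    (hT : IsAlmostInvariant ε f T) {g : β → β} (hg : Surjective g) :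
    IsAlmostInvariant ε (Prod.map f g) (T ×ˢ univ) := by
  rw [IsAlmostInvariant, prodMap_image_product, image_univ_of_surjective hg, product_inter_product,
    inter_self, card_product, card_product, Nat.cast_mul, Nat.cast_mul, ← mul_assoc]
  exact mul_le_mul_of_nonneg_right hT (by positivity)

lemma IsAlmostInvariant.mul_of_injOn [Semigroup α] {ε : ℝ} {x : α} {T B : Finset α}
    (hT : IsAlmostInvariant ε (x * ·) T) (hinj : (T ×ˢ B : Set (α × α)).InjOn fun p => p.1 * p.2) :
    IsAlmostInvariant ε (x * ·) (T * B) := by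
  have hsub : (T ∩ T.image (x * ·)) * B ⊆ T * B ∩ (T * B).image (x * ·) := by
    intro y hy
    obtain ⟨t, ht, b, hb, rfl⟩ := mem_mul.1 hy
    obtain ⟨ht, htx⟩ := mem_inter.1 ht
    obtain ⟨t₀, ht₀, rfl⟩ := mem_image.1 htx
    exact mem_inter.2 ⟨mul_mem_mul ht hb,
      mem_image.2 ⟨t₀ * b, mul_mem_mul ht₀ hb, (mul_assoc _ _ _).symm⟩⟩
  have hcard : #((T ∩ T.image (x * ·)) * B) = #(T ∩ T.image (x * ·)) * #B :=
    card_mul_iff.2 (hinj.mono (by simp [Set.prod_subset_prod_iff]))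
  rw [IsAlmostInvariant, card_mul_iff.2 hinj]
  calc (1 - ε) * ((#T * #B : ℕ) : ℝ) = (1 - ε) * #T * #B := by push_cast; ring
    _ ≤ #(T ∩ T.image (x * ·)) * #B := by gcongr; exact hT
    _ ≤ _ := by rw [← Nat.cast_mul, ← hcard]; exact_mod_cast card_le_card hsub

lemma tendsto_card_inter_image_div_card {F : ℕ → Finset α} (hF : ∀ N, (F N).Nonempty)
    {f : α → α} {ε : ℕ → ℝ} (hε : Tendsto ε atTop (nhds 0))
    (h : ∀ᶠ N in atTop, IsAlmostInvariant (ε N) f (F N)) :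
    Tendsto (fun N => (#(F N ∩ (F N).image f) : ℝ) / #(F N)) atTop (nhds 1) := by
  have hpos : ∀ N, (0 : ℝ) < #(F N) := fun N => by exact_mod_cast (hF N).card_pos
  refine tendsto_of_tendsto_of_tendsto_of_le_of_le' (g := fun N => 1 - ε N)
    (by simpa using tendsto_const_nhds.sub hε) tendsto_const_nhds ?_ ?_
  · filter_upwards [h] with N hN
    rwa [le_div_iff₀ (hpos N)]
  · filter_upwards with N
    rw [div_le_one (hpos N)]
    exact_mod_cast card_le_card inter_subset_left

end AlmostInvariant

lemma Int.add_one_sub_natAbs_le_card_Icc_inter_image_add (k : ℕ) (m : ℤ) :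
    k + 1 - m.natAbs ≤ #(Icc (0 : ℤ) k ∩ (Icc (0 : ℤ) k).image (· + m)) := by
  have : Icc (0 : ℤ) k ∩ Icc m (k + m) = Icc (max 0 m) (min k (k + m)) := by
    ext; simp only [mem_inter, mem_Icc]; omega
  rw [image_add_right_Icc, zero_add, this, Int.card_Icc]
  omega

lemma pow_le_card_piFinset_Icc_inter_image_add {ι : Type*} [Fintype ι] [DecidableEq ι]
    (k : ℕ) {M : ℕ} {v : ι → ℤ} (hv : ∀ i, (v i).natAbs ≤ M) :
    (k + 1 - M) ^ Fintype.card ι ≤ #(Fintype.piFinset (fun _ => Icc (0 : ℤ) k) ∩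
      (Fintype.piFinset fun _ => Icc (0 : ℤ) k).image (· + v)) := by
  have : (Fintype.piFinset fun _ => Icc (0 : ℤ) k).image (· + v) =
      Fintype.piFinset fun i => (Icc (0 : ℤ) k).image (· + v i) := by
    rw [Fintype.piFinset_image]; rfl
  rw [this, ← Fintype.piFinset_inter, Fintype.card_piFinset, ← card_univ]
  exact pow_card_le_prod _ _ _ fun i _ =>
    (Nat.sub_le_sub_left (hv i) _).trans
      (Int.add_one_sub_natAbs_le_card_Icc_inter_image_add k (v i))

lemma one_sub_mul_pow_le_sub_pow {K M ε : ℝ} (n : ℕ) (hK : 0 < K) (hMK : M ≤ K)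
    (hε : n * M ≤ ε * K) : (1 - ε) * K ^ n ≤ (K - M) ^ n := by
  have hMK' : M / K ≤ 1 := (div_le_one hK).2 hMK
  calc (1 - ε) * K ^ n ≤ (1 + n * -(M / K)) * K ^ n := by
        gcongr
        have : n * M / K ≤ ε := by rwa [div_le_iff₀ hK]
        rw [mul_neg, ← mul_div_assoc]
        linarith
    _ ≤ (1 + -(M / K)) ^ n * K ^ n := by gcongr; exact one_add_mul_le_pow (by linarith) n
    _ = (K - M) ^ n := by rw [← mul_pow]; congr 1; field_simp; ring

lemma exists_isAlmostInvariant_piFinset_Icc {ι : Type*} [Fintype ι] [DecidableEq ι]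
    (S : Finset (ι → ℤ)) {ε : ℝ} (hε : 0 < ε) :
    ∃ k : ℕ, ∀ v ∈ S, IsAlmostInvariant ε (· + v) (Fintype.piFinset fun _ => Icc (0 : ℤ) k) := by
  set M := S.sup fun v => univ.sup fun i => (v i).natAbs
  have hM : ∀ v ∈ S, ∀ i, (v i).natAbs ≤ M := fun v hv i =>
    (le_sup (f := fun i => (v i).natAbs) (mem_univ i)).trans
      (le_sup (f := fun v => univ.sup fun i => (v i).natAbs) hv)
  obtain ⟨k, hk⟩ := exists_nat_ge (M + Fintype.card ι * M / ε)
  have hMk : M ≤ k := by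
    have : (0 : ℝ) ≤ Fintype.card ι * M / ε := by positivity
    exact_mod_cast (by linarith : (M : ℝ) ≤ k)
  have hnM : (Fintype.card ι * M : ℝ) ≤ ε * k := by
    rw [← div_le_iff₀' hε]
    linarith [M.cast_nonneg (α := ℝ)]
  refine ⟨k, fun v hv => ?_⟩
  have hI : #(Icc (0 : ℤ) k) = k + 1 := by rw [Int.card_Icc]; omega
  rw [IsAlmostInvariant, Fintype.card_piFinset, prod_const, hI, card_univ]
  calc (1 - ε) * (((k + 1) ^ Fintype.card ι : ℕ) : ℝ)
      ≤ ((k + 1 - M : ℕ) : ℝ) ^ Fintype.card ι := by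
        rw [Nat.cast_sub (by omega)]
        push_cast
        refine one_sub_mul_pow_le_sub_pow _ (by positivity) (by norm_cast; omega) ?_
        linarith
    _ ≤ _ := by exact_mod_cast pow_le_card_piFinset_Icc_inter_image_add k (hM v hv)

lemma AddCommGroup.exists_isAlmostInvariant {G : Type*} [AddCommGroup G] [DecidableEq G]
    (S : Finset G) {ε : ℝ} (hε : 0 < ε) :
    ∃ T : Finset G, T.Nonempty ∧ ∀ g ∈ S, IsAlmostInvariant ε (· + g) T := by
  classical
  let H := AddSubgroup.closure (S : Set G)
  have : AddGroup.FG H := AddGroup.closure_finset_fg S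
  obtain ⟨n, ι, _, p, hp, e, ⟨ψ⟩⟩ := AddCommGroup.equiv_free_prod_directSum_zmod H
  have : ∀ i, NeZero (p i ^ e i) := fun i => ⟨pow_ne_zero _ (hp i).ne_zero⟩
  let χ : (Fin n → ℤ) × (∀ i, ZMod (p i ^ e i)) ≃+ H :=
    (ψ.trans (Finsupp.addEquivFunOnFinite.prodCongr (DirectSum.addEquivProd _))).symm
  let ρ : (Fin n → ℤ) × (∀ i, ZMod (p i ^ e i)) →+ G := H.subtype.comp χ
  have hρ : Injective ρ := H.subtype_injective.comp χ.injective
  obtain ⟨k, hk⟩ :=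
    exists_isAlmostInvariant_piFinset_Icc ((S.preimage ρ hρ.injOn).image Prod.fst) hε
  refine ⟨((Fintype.piFinset fun _ => Icc (0 : ℤ) k) ×ˢ univ).image ρ, by simp, fun g hg => ?_⟩
  obtain ⟨x, hx⟩ := χ.surjective ⟨g, AddSubgroup.subset_closure hg⟩
  have hxS : x ∈ S.preimage ρ hρ.injOn := by simpa [ρ, hx]
  refine ((hk x.1 (mem_image_of_mem _ hxS)).prod_univ (add_right_surjective x.2)).image hρ
    fun a => ?_
  show ρ (a + x) = ρ a + g
  rw [map_add]
  simp [ρ, hx]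

section Field

variable {K : Type*} [Field K] [DecidableEq K] {ε : ℝ}

lemma exists_isAlmostInvariant_mul {E : Finset K} (hE : 0 ∉ E) (hε : 0 < ε) :
    ∃ T : Finset K, T.Nonempty ∧ 0 ∉ T ∧ ∀ x ∈ E, IsAlmostInvariant ε (x * ·) T := by
  let ρ : Additive Kˣ → K := fun u => (u.toMul : K)
  have hρ : Injective ρ := Units.val_injective.comp Additive.toMul.injective
  obtain ⟨T, hTne, hT⟩ := AddCommGroup.exists_isAlmostInvariant (E.preimage ρ hρ.injOn) hε
  refine ⟨T.image ρ, hTne.image ρ, by simp [ρ], fun x hx => ?_⟩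
  have hu : Additive.ofMul (Units.mk0 x (ne_of_mem_of_not_mem hx hE)) ∈
      E.preimage ρ hρ.injOn := by
    simpa [ρ]
  exact (hT _ hu).image hρ fun a => mul_comm _ _

lemma exists_injOn_mul_image_add [Infinite K] {T : Finset K} (hT : 0 ∉ T) (A : Finset K) :
    ∃ c, (T ×ˢ A.image (· + c) : Set (K × K)).InjOn fun p => p.1 * p.2 := by
  -- `t * (a + c) = t' * (a' + c)` with `t ≠ t'` forces `c = (t' * a' - t * a) / (t - t')`.
  obtain ⟨c, hc⟩ := Infinite.exists_notMem_finset (((T ×ˢ T) ×ˢ (A ×ˢ A)).image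
    fun q => (q.1.2 * q.2.2 - q.1.1 * q.2.1) / (q.1.1 - q.1.2))
  refine ⟨c, ?_⟩
  rintro ⟨t, b⟩ hb ⟨t', b'⟩ hb' h
  simp only [coe_image, Set.mem_prod, mem_coe, Set.mem_image] at hb hb'
  obtain ⟨ht, a, ha, rfl⟩ := hb
  obtain ⟨ht', a', ha', rfl⟩ := hb'
  dsimp only at h
  obtain rfl | htt := eq_or_ne t t'
  · rw [mul_left_cancel₀ (ne_of_mem_of_not_mem ht hT) h]
  · refine absurd (mem_image.2 ⟨((t, t'), (a, a')), by simp [*], ?_⟩) hc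
    rw [div_eq_iff (sub_ne_zero.2 htt)]
    linear_combination -h

lemma isAlmostInvariant_add_mul_of_injOn {x : K} {T B : Finset K} (hT : 0 ∉ T)
    (hB : ∀ t ∈ T, IsAlmostInvariant ε (· + x / t) B)
    (hinj : (T ×ˢ B : Set (K × K)).InjOn fun p => p.1 * p.2) :
    IsAlmostInvariant ε (· + x) (T * B) := by
  set P := (T ×ˢ B).filter fun p => p.2 ∈ B.image (· + x / p.1)
  have hcardP : #P = ∑ t ∈ T, #(B ∩ B.image (· + x / t)) := by
    simp only [P, card_filter, sum_product, ← filter_mem_eq_inter]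
  have hPsub : (P : Set (K × K)) ⊆ T ×ˢ B := by
    rw [← coe_product]
    exact coe_subset.2 (filter_subset _ _)
  have hsub : P.image (fun p => p.1 * p.2) ⊆ T * B ∩ (T * B).image (· + x) := by
    intro y hy
    obtain ⟨⟨t, b⟩, hP, rfl⟩ := mem_image.1 hy
    obtain ⟨htb, hbx⟩ := mem_filter.1 hP
    obtain ⟨ht, hb⟩ := mem_product.1 htb
    dsimp only at ht hbx ⊢
    obtain ⟨b₀, hb₀, rfl⟩ := mem_image.1 hbx
    refine mem_inter.2 ⟨mul_mem_mul ht hb, mem_image.2 ⟨t * b₀, mul_mem_mul ht hb₀, ?_⟩⟩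
    field_simp [ne_of_mem_of_not_mem ht hT]
  rw [IsAlmostInvariant, card_mul_iff.2 hinj]
  calc (1 - ε) * ((#T * #B : ℕ) : ℝ) = ∑ t ∈ T, (1 - ε) * #B := by
        rw [sum_const, nsmul_eq_mul]; push_cast; ring
    _ ≤ ∑ t ∈ T, (#(B ∩ B.image (· + x / t)) : ℝ) := sum_le_sum hB
    _ = #(P.image fun p => p.1 * p.2) := by
        rw [card_image_of_injOn (hinj.mono hPsub), hcardP]
        push_cast
        rfl
    _ ≤ _ := by exact_mod_cast card_le_card hsub

lemma exists_isAlmostInvariant_add_and_mul [Infinite K] {E : Finset K} (hE : 0 ∉ E)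
    (hε : 0 < ε) : ∃ F : Finset K, F.Nonempty ∧
      ∀ x ∈ E, IsAlmostInvariant ε (· + x) F ∧ IsAlmostInvariant ε (x * ·) F := by
  obtain ⟨T, hTne, hT0, hT⟩ := exists_isAlmostInvariant_mul hE hε
  obtain ⟨A, hAne, hA⟩ :=
    AddCommGroup.exists_isAlmostInvariant ((E ×ˢ T).image fun p => p.1 / p.2) hε
  obtain ⟨c, hinj⟩ := exists_injOn_mul_image_add hT0 A
  refine ⟨T * A.image (· + c), hTne.mul (hAne.image _), fun x hx =>
    ⟨isAlmostInvariant_add_mul_of_injOn hT0 (fun t ht => ?_) hinj, (hT x hx).mul_of_injOn hinj⟩⟩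
  exact (hA (x / t) (mem_image.2 ⟨(x, t), mem_product.2 ⟨hx, ht⟩, rfl⟩)).image
    (add_left_injective c) fun a => add_right_comm a _ c

end Field

theorem exists_double_folner (K : Type*) [Field K] [Countable K] [Infinite K]
    [DecidableEq K] :
    ∃ F : ℕ → Finset K, IsDoubleFolner F := by
  obtain ⟨e, he⟩ := exists_surjective_nat K
  choose F hFne hF using fun N : ℕ => exists_isAlmostInvariant_add_and_mul
    (notMem_erase 0 ((range N).image e)) (Nat.one_div_pos_of_nat (α := ℝ) (n := N))
  refine ⟨F, hFne, fun x hx => ?_⟩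
  obtain ⟨m, rfl⟩ := he x
  have hmem : ∀ᶠ N in atTop, e m ∈ ((range N).image e).erase 0 := eventually_atTop.2
    ⟨m + 1, fun N hN => mem_erase.2 ⟨hx, mem_image_of_mem _ (mem_range.2 (by omega))⟩⟩
  have hε := tendsto_one_div_add_atTop_nhds_zero_nat (𝕜 := ℝ)
  exact ⟨tendsto_card_inter_image_div_card hFne hε (hmem.mono fun N h => (hF N _ h).1),
    tendsto_card_inter_image_div_card hFne hε (hmem.mono fun N h => (hF N _ h).2)⟩
end

section
/- Let K be a countable field with a measure preserving action of the affine group A_K on a probability space (Ω, B, μ). Let P_A and P_M denote the orthogonal projections in L²(Ω,μ) onto the subspaces of functions fixed by the additive subgroup S_A and by the multiplicative subgroup S_M respectively. Then P_A P_M = P_M P_A. -/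
/-!
For `u ≠ 0` the Koopman operator `g ↦ g ∘ M_u` is unitary and, because
`M_u A_v M_u⁻¹ = A_{uv}`, it maps the `S_A`-invariant subspace onto itself; a unitary preserving
a subspace commutes with the orthogonal projection onto it, so `P_A` maps `S_M`-invariant vectors
to `S_M`-invariant vectors. A self-adjoint projection preserving the range of another orthogonal
projection commutes with it.
-/

open MeasureTheory

/-- A measure preserving action of the affine group `A_K = {x ↦ u*x + v : u ∈ K*, v ∈ K}`
of a field `K` on a measure space `(Ω, μ)`, described via the actions `TA` of the additive
subgroup and `TM` of the multiplicative subgroup, together with the defining relation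
`M_u ∘ A_v = A_{u*v} ∘ M_u` of the semidirect product. -/
structure AffineAction (K : Type*) [Field K] {Ω : Type*} [MeasurableSpace Ω]
    (μ : Measure Ω) where
  TA : K → Ω → Ω
  TM : K → Ω → Ω
  TA_zero : TA 0 = id
  TA_add : ∀ u v : K, TA (u + v) = TA u ∘ TA v
  TM_one : TM 1 = id
  TM_mul : ∀ u v : K, u ≠ 0 → v ≠ 0 → TM (u * v) = TM u ∘ TM v
  comm : ∀ u v : K, u ≠ 0 → TM u ∘ TA v = TA (u * v) ∘ TM u
  TA_mp : ∀ u : K, MeasurePreserving (TA u) μ μ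
  TM_mp : ∀ u : K, u ≠ 0 → MeasurePreserving (TM u) μ μ

open scoped InnerProductSpace

section OrthogonalProjection

variable {𝕜 E : Type*} [RCLike 𝕜] [NormedAddCommGroup E] [InnerProductSpace 𝕜 E]

/-- Unlike `Submodule.starProjection`, this does not require `S` to be complete. -/
def IsOrthogonalProjectionOnto (S : Submodule 𝕜 E) (P : E → E) : Prop :=
  ∀ f, P f ∈ S ∧ f - P f ∈ Sᗮ

theorem isOrthogonalProjectionOnto_iff {S : Submodule 𝕜 E} {P : E → E} :
    IsOrthogonalProjectionOnto S P ↔ ∀ f, P f ∈ S ∧ ∀ g ∈ S, ⟪f - P f, g⟫_𝕜 = 0 := by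
  simp only [IsOrthogonalProjectionOnto, Submodule.mem_orthogonal']

namespace IsOrthogonalProjectionOnto

variable {S T : Submodule 𝕜 E}

theorem apply_eq {P : E → E} (hP : IsOrthogonalProjectionOnto S P) {f p : E} (hp : p ∈ S)
    (hfp : f - p ∈ Sᗮ) : P f = p := by
  have hS : P f - p ∈ S := S.sub_mem (hP f).1 hp
  have hS' : P f - p ∈ Sᗮ := by
    simpa only [sub_sub_sub_cancel_left] using Sᗮ.sub_mem hfp (hP f).2
  exact sub_eq_zero.1 (inner_self_eq_zero.1 (Submodule.inner_right_of_mem_orthogonal hS hS'))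

theorem inner_apply_left {P : E → E} (hP : IsOrthogonalProjectionOnto S P) (a b : E) :
    ⟪P a, b⟫_𝕜 = ⟪a, P b⟫_𝕜 :=
  calc ⟪P a, b⟫_𝕜 = ⟪P a, P b + (b - P b)⟫_𝕜 := by rw [add_sub_cancel]
    _ = ⟪P a, P b⟫_𝕜 := by
      rw [inner_add_right, Submodule.inner_right_of_mem_orthogonal (hP a).1 (hP b).2, add_zero]
    _ = ⟪P a + (a - P a), P b⟫_𝕜 := by
      rw [inner_add_left, Submodule.inner_left_of_mem_orthogonal (hP b).1 (hP a).2, add_zero]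
    _ = ⟪a, P b⟫_𝕜 := by rw [add_sub_cancel]

theorem apply_map_eq_map_apply {P : E → E} (hP : IsOrthogonalProjectionOnto S P)
    (U : E →ₗᵢ[𝕜] E) (hU : Function.Surjective U) (hUS : ∀ g, U g ∈ S ↔ g ∈ S) (f : E) :
    P (U f) = U (P f) := by
  refine hP.apply_eq ((hUS _).2 (hP f).1) ?_
  rw [← map_sub, Submodule.mem_orthogonal]
  intro g hg
  obtain ⟨h, rfl⟩ := hU g
  rw [U.inner_map_map]
  exact Submodule.inner_right_of_mem_orthogonal ((hUS h).1 hg) (hP f).2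

theorem apply_comm_of_mapsTo {P : E →L[𝕜] E} {Q : E → E} (hP : IsOrthogonalProjectionOnto S P)
    (hQ : IsOrthogonalProjectionOnto T Q) (hPT : ∀ g ∈ T, P g ∈ T) (f : E) :
    P (Q f) = Q (P f) := by
  refine (hQ.apply_eq (hPT _ (hQ f).1) ?_).symm
  rw [← map_sub, Submodule.mem_orthogonal]
  intro g hg
  rw [← hP.inner_apply_left]
  exact Submodule.inner_right_of_mem_orthogonal (hPT g hg) (hQ f).2

end IsOrthogonalProjectionOnto

end OrthogonalProjection

namespace MeasureTheory.Lp

variable {α E : Type*} [MeasurableSpace α] {μ : Measure α} [NormedAddCommGroup E] {p : ENNReal}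

theorem compMeasurePreserving_congr {β : Type*} [MeasurableSpace β] {μb : Measure β}
    {f f' : α → β} (hf : MeasurePreserving f μ μb) (hf' : MeasurePreserving f' μ μb) (h : f = f')
    (g : Lp E p μb) :
    compMeasurePreserving f hf g = compMeasurePreserving f' hf' g := by
  subst h; rfl

variable (𝕜 : Type*) [NormedRing 𝕜] [Module 𝕜 E] [IsBoundedSMul 𝕜 E]

def invariantSubmodule {ι : Type*} (T : ι → α → α) (hT : ∀ i, MeasurePreserving (T i) μ μ) :
    Submodule 𝕜 (Lp E p μ) :=
  ⨅ i, LinearMap.eqLocus (compMeasurePreservingₗ 𝕜 (T i) (hT i)) LinearMap.id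

variable {𝕜} {ι : Type*} {T : ι → α → α} {hT : ∀ i, MeasurePreserving (T i) μ μ}

theorem mem_invariantSubmodule {g : Lp E p μ} :
    g ∈ invariantSubmodule 𝕜 T hT ↔ ∀ i, compMeasurePreserving (T i) (hT i) g = g := by
  simp only [invariantSubmodule, Submodule.mem_iInf, LinearMap.mem_eqLocus]
  rfl

theorem mem_invariantSubmodule_iff_ae {g : Lp E p μ} :
    g ∈ invariantSubmodule 𝕜 T hT ↔ ∀ i, (g ∘ T i) =ᵐ[μ] g := by
  rw [mem_invariantSubmodule]
  exact forall_congr' fun i => Lp.ext_iff.trans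
    ⟨fun h => (coeFn_compMeasurePreserving g (hT i)).symm.trans h,
      fun h => (coeFn_compMeasurePreserving g (hT i)).trans h⟩

end MeasureTheory.Lp

namespace AffineAction

variable {K Ω : Type*} [Field K] [MeasurableSpace Ω] {μ : Measure Ω} (act : AffineAction K μ)

def addInvariant : Submodule ℝ (Lp ℝ 2 μ) :=
  Lp.invariantSubmodule ℝ act.TA act.TA_mp

def mulInvariant : Submodule ℝ (Lp ℝ 2 μ) :=
  Lp.invariantSubmodule ℝ (fun u : Kˣ => act.TM u) fun u => act.TM_mp u u.ne_zero

def mulOp (u : Kˣ) : Lp ℝ 2 μ →ₗᵢ[ℝ] Lp ℝ 2 μ :=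
  Lp.compMeasurePreservingₗᵢ ℝ (act.TM u) (act.TM_mp u u.ne_zero)

theorem mulOp_apply (u : Kˣ) (g : Lp ℝ 2 μ) :
    act.mulOp u g = Lp.compMeasurePreserving (act.TM u) (act.TM_mp u u.ne_zero) g :=
  rfl

theorem mem_mulInvariant {g : Lp ℝ 2 μ} : g ∈ act.mulInvariant ↔ ∀ u, act.mulOp u g = g :=
  Lp.mem_invariantSubmodule

theorem mem_mulInvariant_iff_ae {g : Lp ℝ 2 μ} :
    g ∈ act.mulInvariant ↔ ∀ u : K, u ≠ 0 → ((g : Ω → ℝ) ∘ act.TM u) =ᵐ[μ] g := by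
  rw [mulInvariant, Lp.mem_invariantSubmodule_iff_ae]
  exact ⟨fun h u hu => h (Units.mk0 u hu), fun h u => h u u.ne_zero⟩

theorem mulOp_one (g : Lp ℝ 2 μ) : act.mulOp 1 g = g := by
  rw [mulOp_apply, Lp.compMeasurePreserving_congr _
    (MeasurePreserving.id μ) (by rw [Units.val_one, act.TM_one]), Lp.compMeasurePreserving_id_apply]

theorem mulOp_mul (u v : Kˣ) (g : Lp ℝ 2 μ) :
    act.mulOp (u * v) g = act.mulOp v (act.mulOp u g) := by
  rw [mulOp_apply, mulOp_apply, mulOp_apply, Lp.compMeasurePreserving_congr _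
    ((act.TM_mp u u.ne_zero).comp (act.TM_mp v v.ne_zero))
    (by rw [Units.val_mul, act.TM_mul u v u.ne_zero v.ne_zero]),
    Lp.compMeasurePreserving_comp_apply]

theorem mulOp_surjective (u : Kˣ) : Function.Surjective (act.mulOp u) :=
  fun g => ⟨act.mulOp u⁻¹ g, by rw [← mulOp_mul, inv_mul_cancel, mulOp_one]⟩

theorem mulOp_mem_addInvariant {g : Lp ℝ 2 μ} (hg : g ∈ act.addInvariant) (u : Kˣ) :
    act.mulOp u g ∈ act.addInvariant := by
  rw [addInvariant, Lp.mem_invariantSubmodule] at hg ⊢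
  intro v
  rw [mulOp_apply, ← Lp.compMeasurePreserving_comp_apply, Lp.compMeasurePreserving_congr _
    ((act.TA_mp (u * v)).comp (act.TM_mp u u.ne_zero)) (act.comm u v u.ne_zero),
    Lp.compMeasurePreserving_comp_apply _ (act.TA_mp _), hg]

theorem mulOp_mem_addInvariant_iff {g : Lp ℝ 2 μ} (u : Kˣ) :
    act.mulOp u g ∈ act.addInvariant ↔ g ∈ act.addInvariant := by
  refine ⟨fun h => ?_, fun h => act.mulOp_mem_addInvariant h u⟩
  simpa only [← mulOp_mul, mul_inv_cancel, mulOp_one] using act.mulOp_mem_addInvariant h u⁻¹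

theorem apply_mem_mulInvariant {P : Lp ℝ 2 μ → Lp ℝ 2 μ}
    (hP : IsOrthogonalProjectionOnto act.addInvariant P) {g : Lp ℝ 2 μ}
    (hg : g ∈ act.mulInvariant) : P g ∈ act.mulInvariant := by
  rw [mem_mulInvariant] at hg ⊢
  intro u
  rw [← hP.apply_map_eq_map_apply _ (act.mulOp_surjective u)
    fun _ => act.mulOp_mem_addInvariant_iff u, hg u]

end AffineAction

theorem projections_commute_general {K : Type*} [Field K]
    {Ω : Type*} [MeasurableSpace Ω] {μ : Measure Ω}
    (act : AffineAction K μ)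
    (PA PM : Lp ℝ 2 μ →L[ℝ] Lp ℝ 2 μ)
    (hPA : ∀ f : Lp ℝ 2 μ,
      (∀ u : K, ((PA f : Ω → ℝ) ∘ act.TA u) =ᵐ[μ] (PA f : Ω → ℝ)) ∧
      (∀ g : Lp ℝ 2 μ, (∀ u : K, ((g : Ω → ℝ) ∘ act.TA u) =ᵐ[μ] (g : Ω → ℝ)) →
        inner ℝ (f - PA f) g = (0 : ℝ)))
    (hPM : ∀ f : Lp ℝ 2 μ,
      (∀ u : K, u ≠ 0 → ((PM f : Ω → ℝ) ∘ act.TM u) =ᵐ[μ] (PM f : Ω → ℝ)) ∧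
      (∀ g : Lp ℝ 2 μ, (∀ u : K, u ≠ 0 → ((g : Ω → ℝ) ∘ act.TM u) =ᵐ[μ] (g : Ω → ℝ)) →
        inner ℝ (f - PM f) g = (0 : ℝ))) :
    ∀ f : Lp ℝ 2 μ, PA (PM f) = PM (PA f) := by
  have hA : IsOrthogonalProjectionOnto act.addInvariant PA :=
    isOrthogonalProjectionOnto_iff.2 fun f => by
      simpa only [AffineAction.addInvariant, Lp.mem_invariantSubmodule_iff_ae] using hPA f
  have hM : IsOrthogonalProjectionOnto act.mulInvariant PM :=
    isOrthogonalProjectionOnto_iff.2 fun f => by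
      simpa only [act.mem_mulInvariant_iff_ae] using hPM f
  exact hA.apply_comm_of_mapsTo hM fun g => act.apply_mem_mulInvariant hA

/-- The orthogonal projections of `L²(Ω,μ)` onto the subspace of functions fixed by the
additive subgroup `S_A` and onto the subspace of functions fixed by the multiplicative
subgroup `S_M` commute.  Here `P_A` (resp. `P_M`) is characterized as the orthogonal
projection: `P f` is fixed by the subgroup and `f - P f` is orthogonal to every vector
fixed by the subgroup. -/
theorem projections_commute {K : Type*} [Field K] [Countable K]
    {Ω : Type*} [MeasurableSpace Ω] {μ : Measure Ω} [IsProbabilityMeasure μ]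
    (act : AffineAction K μ)
    (PA PM : Lp ℝ 2 μ →L[ℝ] Lp ℝ 2 μ)
    (hPA : ∀ f : Lp ℝ 2 μ,
      (∀ u : K, ((PA f : Ω → ℝ) ∘ act.TA u) =ᵐ[μ] (PA f : Ω → ℝ)) ∧
      (∀ g : Lp ℝ 2 μ, (∀ u : K, ((g : Ω → ℝ) ∘ act.TA u) =ᵐ[μ] (g : Ω → ℝ)) →
        inner ℝ (f - PA f) g = (0 : ℝ)))
    (hPM : ∀ f : Lp ℝ 2 μ,
      (∀ u : K, u ≠ 0 → ((PM f : Ω → ℝ) ∘ act.TM u) =ᵐ[μ] (PM f : Ω → ℝ)) ∧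
      (∀ g : Lp ℝ 2 μ, (∀ u : K, u ≠ 0 → ((g : Ω → ℝ) ∘ act.TM u) =ᵐ[μ] (g : Ω → ℝ)) →
        inner ℝ (f - PM f) g = (0 : ℝ))) :
    ∀ f : Lp ℝ 2 μ, PA (PM f) = PM (PA f) :=
  projections_commute_general act PA PM hPA hPM
end

section
/- Let X be a set, G a countable group acting on X, and (G_N) a sequence of finite subsets of X such that |G_N ∩ g·G_N|/|G_N| → 1 for every g ∈ G. Let E ⊂ X have positive upper density along (G_N). Then there exist a compact metric space Ω, a Borel probability measure μ, a μ-preserving G-action (T_g) on Ω, and a Borel set B ⊂ Ω with μ(B) equal to the upper density of E, such that for all g_1,…,g_k ∈ G, the upper density of g_1 E ∩ … ∩ g_k E along (G_N) is at least μ(T_{g_1}B ∩ … ∩ T_{g_k}B). -/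
/-!
Code each point `x` by its itinerary `h ↦ [x ∈ h • E]`, a point of the Cantor space `G → Bool`
on which `G` acts by shifts. The empirical measures of the itineraries of the points of `G_N`
have a weak-* limit `μ` along an ultrafilter on which the density of `E` tends to its upper
density. By the Følner property, integrating a bounded continuous function against an
empirical measure and against its shift differ by `o(1)`, so `μ` is shift-invariant. The sets
`T_{g_1}B ∩ … ∩ T_{g_k}B` are clopen cylinders, so their `μ`-measures are limits of the
densities of `g_1E ∩ … ∩ g_kE` along the ultrafilter, hence bounded by the upper density.
-/

open Filter MeasureTheory
open scoped Pointwise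

open scoped Classical in
/-- The upper density of `E ⊆ X` along a sequence of finite subsets `GN` of `X`. -/
noncomputable def upperDensity {X : Type*} (GN : ℕ → Finset X) (E : Set X) : ℝ :=
  limsup (fun N => (((GN N).filter (fun x => x ∈ E)).card : ℝ) / (GN N).card) atTop

open scoped ENNReal
open BoundedContinuousFunction

open scoped Classical in
noncomputable def Finset.density {X : Type*} (s : Finset X) (A : Set X) : ℝ :=
  (s.filter (· ∈ A)).card / s.card

section Density

variable {X : Type*}

theorem Finset.density_nonneg (s : Finset X) (A : Set X) : 0 ≤ s.density A := by
  unfold Finset.density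
  positivity

theorem Finset.density_le_one (s : Finset X) (A : Set X) : s.density A ≤ 1 := by
  classical
  unfold Finset.density
  exact div_le_one_of_le₀ (by exact_mod_cast Finset.card_filter_le _ _) (Nat.cast_nonneg _)

theorem upperDensity_eq_limsup_density (GN : ℕ → Finset X) (E : Set X) :
    upperDensity GN E = limsup (fun N => (GN N).density E) atTop :=
  rfl

theorem isBoundedUnder_le_density (GN : ℕ → Finset X) (A : Set X) (l : Filter ℕ) :
    IsBoundedUnder (· ≤ ·) l fun N => (GN N).density A :=
  isBoundedUnder_of ⟨1, fun N => (GN N).density_le_one A⟩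

theorem isCoboundedUnder_le_density (GN : ℕ → Finset X) (A : Set X) (l : Filter ℕ) [l.NeBot] :
    IsCoboundedUnder (· ≤ ·) l fun N => (GN N).density A :=
  isCoboundedUnder_le_of_le l fun N => (GN N).density_nonneg A

theorem exists_ultrafilter_tendsto_upperDensity (GN : ℕ → Finset X) (E : Set X) :
    ∃ U : Ultrafilter ℕ, (U : Filter ℕ) ≤ atTop ∧
      Tendsto (fun N => (GN N).density E) U (nhds (upperDensity GN E)) :=
  mapClusterPt_iff_ultrafilter.mp <| MapClusterPt.limsup
    (isCoboundedUnder_le_density GN E atTop) (isBoundedUnder_le_density GN E atTop)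

theorem le_upperDensity_of_tendsto {GN : ℕ → Finset X} {A : Set X} {L : Filter ℕ} [L.NeBot]
    (hL : L ≤ atTop) {l : ℝ} (h : Tendsto (fun N => (GN N).density A) L (nhds l)) :
    l ≤ upperDensity GN A := by
  rw [upperDensity_eq_limsup_density, ← h.limsup_eq]
  exact limsup_le_limsup_of_le hL (isCoboundedUnder_le_density GN A L)
    (isBoundedUnder_le_density GN A atTop)

end Density

open Finset in
theorem Finset.abs_sum_sub_sum_le_of_card_eq {X : Type*} [DecidableEq X] {s t : Finset X}
    (hst : #t = #s) {F : X → ℝ} {M : ℝ} (hF : ∀ x, |F x| ≤ M) :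
    |∑ x ∈ t, F x - ∑ x ∈ s, F x| ≤ 2 * M * (#s - #(s ∩ t)) := by
  have hsum : ∀ u : Finset X, |∑ x ∈ u, F x| ≤ M * #u := fun u =>
    (abs_sum_le_sum_abs _ _).trans (by simpa [mul_comm] using sum_le_sum fun x _ => hF x)
  have hts : (#(t \ s) : ℝ) = #s - #(s ∩ t) := by
    have := card_sdiff_add_card_inter t s
    rw [inter_comm] at this
    rw [← hst]
    push_cast [← this]
    ring
  have hst' : (#(s \ t) : ℝ) = #s - #(s ∩ t) := by
    have := card_sdiff_add_card_inter s t
    push_cast [← this]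
    ring
  rw [← sum_sdiff_sub_sum_sdiff]
  calc |∑ x ∈ t \ s, F x - ∑ x ∈ s \ t, F x|
      ≤ |∑ x ∈ t \ s, F x| + |∑ x ∈ s \ t, F x| := abs_sub _ _
    _ ≤ M * #(t \ s) + M * #(s \ t) := add_le_add (hsum _) (hsum _)
    _ = 2 * M * (#s - #(s ∩ t)) := by rw [hts, hst']; ring

section EmpiricalMeasure

variable {X Ω : Type*} [MeasurableSpace Ω]

noncomputable def empiricalMeasure (s : Finset X) (φ : X → Ω) : Measure Ω :=
  (s.card : ℝ≥0∞)⁻¹ • ∑ x ∈ s, Measure.dirac (φ x)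

open scoped Classical in
theorem empiricalMeasure_apply (s : Finset X) (φ : X → Ω) {A : Set Ω} (hA : MeasurableSet A) :
    empiricalMeasure s φ A = (s.filter (fun x => φ x ∈ A)).card / s.card := by
  simp [empiricalMeasure, Measure.dirac_apply' _ hA, Set.indicator, Finset.sum_boole,
    ENNReal.div_eq_inv_mul]

theorem measureReal_empiricalMeasure (s : Finset X) (φ : X → Ω) {A : Set Ω}
    (hA : MeasurableSet A) : (empiricalMeasure s φ).real A = s.density (φ ⁻¹' A) := by
  rw [measureReal_def, empiricalMeasure_apply s φ hA, ENNReal.toReal_div]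
  rfl

theorem isProbabilityMeasure_empiricalMeasure {s : Finset X} (hs : s.Nonempty) (φ : X → Ω) :
    IsProbabilityMeasure (empiricalMeasure s φ) := by
  constructor
  rw [empiricalMeasure_apply s φ MeasurableSet.univ]
  simp [ENNReal.div_self, hs.ne_empty]

theorem integral_empiricalMeasure (s : Finset X) (φ : X → Ω) {f : Ω → ℝ}
    (hf : StronglyMeasurable f) :
    ∫ ω, f ω ∂empiricalMeasure s φ = (s.card : ℝ)⁻¹ * ∑ x ∈ s, f (φ x) := by
  rw [empiricalMeasure, integral_smul_measure,
    integral_finsetSum_measure fun x _ => integrable_dirac' hf enorm_lt_top]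
  simp [integral_dirac' _ _ hf]

theorem abs_integral_comp_sub_integral_empiricalMeasure_le {G : Type*} [Group G] [MulAction G X]
    [DecidableEq X] [TopologicalSpace Ω] [OpensMeasurableSpace Ω] {s : Finset X}
    (hs : s.Nonempty) {φ : X → Ω} {T : Ω → Ω} (hT : Measurable T) {g : G}
    (hφ : ∀ x, φ (g • x) = T (φ x)) (f : Ω →ᵇ ℝ) :
    |∫ ω, f (T ω) ∂empiricalMeasure s φ - ∫ ω, f ω ∂empiricalMeasure s φ|
      ≤ 2 * ‖f‖ * (1 - (s ∩ s.image (g • ·)).card / s.card) := by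
  have hsum : ∑ x ∈ s, f (T (φ x)) = ∑ y ∈ s.image (g • ·), f (φ y) := by
    rw [Finset.sum_image fun x _ y _ h => MulAction.injective g h]
    simp only [hφ]
  rw [integral_empiricalMeasure s φ (f := fun ω => f (T ω))
      (f.continuous.measurable.comp hT).stronglyMeasurable,
    integral_empiricalMeasure s φ f.continuous.stronglyMeasurable, hsum, ← mul_sub, abs_mul,
    abs_inv, Nat.abs_cast]
  calc (s.card : ℝ)⁻¹ * |∑ y ∈ s.image (g • ·), f (φ y) - ∑ x ∈ s, f (φ x)|
      ≤ (s.card : ℝ)⁻¹ * (2 * ‖f‖ * (s.card - (s ∩ s.image (g • ·)).card)) := by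
        gcongr
        exact Finset.abs_sum_sub_sum_le_of_card_eq
          (Finset.card_image_of_injective s (MulAction.injective g))
          fun x => (Real.norm_eq_abs _).symm.le.trans (f.norm_coe_le_norm _)
    _ = 2 * ‖f‖ * (1 - (s ∩ s.image (g • ·)).card / s.card) := by
        field_simp

end EmpiricalMeasure

section WeakLimit

variable {X Ω : Type*} [TopologicalSpace Ω] [MeasurableSpace Ω] [HasOuterApproxClosed Ω]
  {GN : ℕ → Finset X} {φ : X → Ω} {ν : ℕ → ProbabilityMeasure Ω}
  {L : Filter ℕ} {μ : ProbabilityMeasure Ω}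

theorem tendsto_density_of_tendsto_empiricalMeasure [OpensMeasurableSpace Ω]
    (hν : ∀ N, (ν N : Measure Ω) = empiricalMeasure (GN N) φ) (hμ : Tendsto ν L (nhds μ))
    {C : Set Ω} (hC : IsClopen C) :
    Tendsto (fun N => (GN N).density (φ ⁻¹' C)) L (nhds ((μ : Measure Ω).real C)) := by
  simp_rw [← measureReal_empiricalMeasure _ _ hC.isOpen.measurableSet, ← hν,
    ProbabilityMeasure.measureReal_eq_coe_coeFn]
  exact (NNReal.continuous_coe.tendsto _).comp
    (ProbabilityMeasure.tendsto_measure_of_isClopen_of_tendsto hμ hC)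

theorem measurePreserving_of_tendsto_empiricalMeasure {G : Type*} [Group G] [MulAction G X]
    [DecidableEq X] [BorelSpace Ω] (hne : ∀ N, (GN N).Nonempty) {g : G}
    (hFol : Tendsto (fun N => ((GN N ∩ (GN N).image (g • ·)).card : ℝ) / (GN N).card)
      atTop (nhds 1))
    {T : Ω → Ω} (hT : Continuous T) (hφ : ∀ x, φ (g • x) = T (φ x))
    (hν : ∀ N, (ν N : Measure Ω) = empiricalMeasure (GN N) φ) [L.NeBot] (hL : L ≤ atTop)
    (hμ : Tendsto ν L (nhds μ)) :
    MeasurePreserving T μ μ := by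
  refine ⟨hT.measurable, congrArg ProbabilityMeasure.toMeasure (tendsto_nhds_unique
    (ProbabilityMeasure.tendsto_map_of_tendsto_of_continuous ν μ hμ hT) ?_)⟩
  rw [ProbabilityMeasure.tendsto_iff_forall_integral_tendsto] at hμ ⊢
  intro f
  have hdefect : Tendsto (fun N => 2 * ‖f‖ * (1 - ((GN N ∩ (GN N).image (g • ·)).card : ℝ)
      / (GN N).card)) atTop (nhds 0) := by
    simpa using ((tendsto_const_nhds (x := (1 : ℝ))).sub hFol).const_mul (2 * ‖f‖)
  have hdiff : Tendsto (fun N => ∫ ω, f (T ω) ∂(ν N : Measure Ω) - ∫ ω, f ω ∂(ν N : Measure Ω))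
      atTop (nhds 0) := by
    refine squeeze_zero_norm (fun N => ?_) hdefect
    rw [Real.norm_eq_abs, hν]
    exact abs_integral_comp_sub_integral_empiricalMeasure_le (hne N) hT.measurable hφ f
  simpa [ProbabilityMeasure.toMeasure_map,
    integral_map hT.aemeasurable f.continuous.aestronglyMeasurable]
    using (hdiff.mono_left hL).add (hμ f)

end WeakLimit

section Cylinder

variable {ι : Type*}

theorem isClopen_setOf_apply_eq_true (i : ι) : IsClopen {ω : ι → Bool | ω i = true} :=
  (isClopen_discrete {true}).preimage (continuous_apply i)

theorem isClopen_setOf_forall_apply_eq_true {κ : Type*} [Finite κ] (is : κ → ι) :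
    IsClopen {ω : ι → Bool | ∀ j, ω (is j) = true} := by
  simpa only [Set.ofPred_forall] using
    isClopen_iInter_of_finite fun j => isClopen_setOf_apply_eq_true (is j)

end Cylinder

section Itinerary

variable {X ι G : Type*} [Group G] [MulAction G X] [MulAction G ι]

attribute [local instance] arrowAction

open scoped Classical in
noncomputable def itinerary (A : ι → Set X) (x : X) : ι → Bool := fun i => decide (x ∈ A i)

theorem itinerary_smul {A : ι → Set X} (hA : ∀ (g : G) i, A (g • i) = g • A i) (g : G)
    (x : X) : itinerary A (g • x) = g • itinerary A x := by
  funext i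
  classical
  show decide (g • x ∈ A i) = decide (x ∈ A (g⁻¹ • i))
  rw [hA, Set.mem_inv_smul_set_iff]

theorem itinerary_preimage_setOf_apply (A : ι → Set X) (i : ι) :
    itinerary A ⁻¹' {ω | ω i = true} = A i := by
  ext x
  simp [itinerary]

theorem itinerary_preimage_setOf_forall {κ : Type*} (A : ι → Set X) (is : κ → ι) :
    itinerary A ⁻¹' {ω | ∀ j, ω (is j) = true} = ⋂ j, A (is j) := by
  ext x
  simp [itinerary]

theorem continuous_arrowAction_smul (g : G) : Continuous fun ω : ι → Bool => g • ω :=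
  continuous_pi fun _ => continuous_apply _

theorem smul_setOf_apply_eq_true (g : G) (i : ι) :
    g • {ω : ι → Bool | ω i = true} = {ω | ω (g • i) = true} := by
  ext ω
  rw [Set.mem_smul_set_iff_inv_smul_mem]
  show ω (g⁻¹⁻¹ • i) = true ↔ _
  rw [inv_inv, Set.mem_ofPred_eq]

theorem iInter_image_smul_setOf_apply_eq_true {κ : Type*} (gs : κ → G) (i : ι) :
    ⋂ j, (fun ω => gs j • ω) '' {ω : ι → Bool | ω i = true} = {ω | ∀ j, ω (gs j • i) = true} := by
  simp only [Set.image_smul, smul_setOf_apply_eq_true, Set.iInter_ofPred]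

end Itinerary

open scoped Classical in
theorem correspondence_principle_general {X : Type*} {G : Type*} [Group G] [Countable G]
    [MulAction G X]
    (GN : ℕ → Finset X) (hne : ∀ N, (GN N).Nonempty)
    (hFol : ∀ g : G,
      Tendsto (fun N => ((GN N ∩ (GN N).image (g • ·)).card : ℝ) / (GN N).card)
        atTop (nhds 1))
    (E : Set X) :
    ∃ (Ω : Type) (_ : MetricSpace Ω) (_ : CompactSpace Ω) (_ : MeasurableSpace Ω)
      (_ : BorelSpace Ω) (μ : Measure Ω) (T : G → Ω → Ω),
      IsProbabilityMeasure μ ∧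
      (∀ g : G, MeasurePreserving (T g) μ μ) ∧
      T 1 = id ∧
      (∀ g h : G, T (g * h) = T g ∘ T h) ∧
      ∃ B : Set Ω, MeasurableSet B ∧ (μ B).toReal = upperDensity GN E ∧
        ∀ (k : ℕ) (gs : Fin k → G),
          (μ (⋂ i, T (gs i) '' B)).toReal ≤ upperDensity GN (⋂ i, gs i • E) := by
  obtain ⟨U, hU, hUE⟩ := exists_ultrafilter_tendsto_upperDensity GN E
  -- `Shrink` is a copy of `G` in `Type`, where `Ω` has to live.
  have : Countable (Shrink.{0} G) := Countable.of_equiv _ (equivShrink.{0} G)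
  let : MulAction G (Shrink.{0} G → Bool) := arrowAction
  let A : Shrink.{0} G → Set X := fun i => (equivShrink.{0} G).symm i • E
  have hA : ∀ (g : G) i, A (g • i) = g • A i := fun g i => by
    simp only [A, equivShrink_symm_smul, smul_eq_mul, mul_smul]
  let i₀ := equivShrink.{0} G 1
  have hA₀ : ∀ g : G, A (g • i₀) = g • E := fun g => by simp [hA, A, i₀]
  let ν : ℕ → ProbabilityMeasure (Shrink.{0} G → Bool) := fun N =>
    ⟨empiricalMeasure (GN N) (itinerary A), isProbabilityMeasure_empiricalMeasure (hne N) _⟩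
  let μ := lim (U.map ν : Filter (ProbabilityMeasure (Shrink.{0} G → Bool)))
  have hμ : Tendsto ν U (nhds μ) := Ultrafilter.le_nhds_lim (U.map ν)
  have hdens := fun {C} (hC : IsClopen C) =>
    tendsto_density_of_tendsto_empiricalMeasure (fun N => rfl) hμ hC
  refine ⟨Shrink.{0} G → Bool, TopologicalSpace.metrizableSpaceMetric _, inferInstance,
    inferInstance, inferInstance, μ, fun g ω => g • ω, inferInstance,
    fun g => measurePreserving_of_tendsto_empiricalMeasure hne (hFol g)
      (continuous_arrowAction_smul g) (itinerary_smul hA g) (fun N => rfl) hU hμ,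
    funext fun ω => one_smul G ω, fun g h => funext fun ω => mul_smul g h ω,
    {ω | ω i₀ = true}, (isClopen_setOf_apply_eq_true i₀).isOpen.measurableSet, ?_, fun k gs => ?_⟩
  · have hlim := hdens (isClopen_setOf_apply_eq_true i₀)
    rw [itinerary_preimage_setOf_apply, (by simpa using hA₀ 1 : A i₀ = E)] at hlim
    exact tendsto_nhds_unique hlim hUE
  · have hlim := hdens (isClopen_setOf_forall_apply_eq_true fun i => gs i • i₀)
    simp only [itinerary_preimage_setOf_forall, hA₀] at hlim
    rw [iInter_image_smul_setOf_apply_eq_true]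
    exact le_upperDensity_of_tendsto hU hlim

open scoped Classical in
/-- Furstenberg correspondence principle for an action of a countable group `G` on a
set `X` along a Følner-type sequence `(G_N)` of finite subsets of `X`. -/
theorem correspondence_principle {X : Type*} {G : Type*} [Group G] [Countable G]
    [MulAction G X]
    (GN : ℕ → Finset X) (hne : ∀ N, (GN N).Nonempty)
    (hFol : ∀ g : G,
      Tendsto (fun N => ((GN N ∩ (GN N).image (g • ·)).card : ℝ) / (GN N).card)
        atTop (nhds 1))
    (E : Set X) (hE : 0 < upperDensity GN E) :
    ∃ (Ω : Type) (_ : MetricSpace Ω) (_ : CompactSpace Ω) (_ : MeasurableSpace Ω)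
      (_ : BorelSpace Ω) (μ : Measure Ω) (T : G → Ω → Ω),
      IsProbabilityMeasure μ ∧
      (∀ g : G, MeasurePreserving (T g) μ μ) ∧
      T 1 = id ∧
      (∀ g h : G, T (g * h) = T g ∘ T h) ∧
      ∃ B : Set Ω, MeasurableSet B ∧ (μ B).toReal = upperDensity GN E ∧
        ∀ (k : ℕ) (gs : Fin k → G),
          (μ (⋂ i, T (gs i) '' B)).toReal ≤ upperDensity GN (⋂ i, gs i • E) :=
  correspondence_principle_general GN hne hFol E
end

section
/- Let G be a group and R ⊂ G a set of recurrence. Then for every finite partition R = R_1 ∪ … ∪ R_r, at least one of the sets R_i is a set of recurrence. -/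
/-!
If neither `A` nor `B` is a set of recurrence, pick for each a measure preserving action and a
set of positive measure witnessing this. The product action on the product space, with the
product set, then witnesses that `A ∪ B` is not a set of recurrence either, because the measure
of `(B₁ ×ˢ B₂) ∩ T_g (B₁ ×ˢ B₂)` is the product of the two return measures. Induction over the
pieces finishes the proof; the empty set is not a set of recurrence (trivial action on a point).
-/

open MeasureTheory

/-- `R ⊆ G` is a set of recurrence: for every measure preserving action of `G` on a
probability space and every measurable set `B` of positive measure, there is a
non-identity `g ∈ R` with `μ(B ∩ T_g B) > 0`. -/
def IsSetOfRecurrence (G : Type*) [Group G] (R : Set G) : Prop :=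
  ∀ (Ω : Type) (_ : MeasurableSpace Ω) (μ : Measure Ω), IsProbabilityMeasure μ →
    ∀ T : G → Ω → Ω, (∀ g, MeasurePreserving (T g) μ μ) → T 1 = id →
      (∀ g h : G, T (g * h) = T g ∘ T h) →
      ∀ B : Set Ω, MeasurableSet B → 0 < μ B →
        ∃ g ∈ R, g ≠ 1 ∧ 0 < μ (B ∩ T g '' B)

lemma Measure.prod_inter_image_prodMap {α β : Type*} [MeasurableSpace α] [MeasurableSpace β]
    (μ : Measure α) (ν : Measure β) [SigmaFinite ν] (f : α → α) (g : β → β)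
    (s : Set α) (t : Set β) :
    μ.prod ν (s ×ˢ t ∩ Prod.map f g '' (s ×ˢ t)) = μ (s ∩ f '' s) * ν (t ∩ g '' t) := by
  rw [Set.prodMap_image_prod, Set.prod_inter_prod, Measure.prod_prod]

section Recurrence

variable {G : Type*} [Group G]

lemma not_isSetOfRecurrence_empty : ¬ IsSetOfRecurrence G ∅ := by
  intro h
  obtain ⟨g, hg, -⟩ := h Unit inferInstance (Measure.dirac ()) inferInstance
    (fun _ => id) (fun _ => MeasurePreserving.id _) rfl (fun _ _ => rfl)
    Set.univ MeasurableSet.univ (by simp)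
  exact hg

lemma IsSetOfRecurrence.or_of_union {A B : Set G} (h : IsSetOfRecurrence G (A ∪ B)) :
    IsSetOfRecurrence G A ∨ IsSetOfRecurrence G B := by
  by_contra! hc
  obtain ⟨hA, hB⟩ := hc
  unfold IsSetOfRecurrence at hA hB
  push Not at hA hB
  obtain ⟨Ω₁, m₁, μ₁, hμ₁, T₁, hT₁, hT₁_one, hT₁_mul, B₁, hB₁, hB₁_pos, hA⟩ := hA
  obtain ⟨Ω₂, m₂, μ₂, hμ₂, T₂, hT₂, hT₂_one, hT₂_mul, B₂, hB₂, hB₂_pos, hB⟩ := hB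
  obtain ⟨g, hg, hg_ne, hpos⟩ := h (Ω₁ × Ω₂) inferInstance (μ₁.prod μ₂) inferInstance
    (fun g => Prod.map (T₁ g) (T₂ g)) (fun g => (hT₁ g).prod (hT₂ g))
    (by simp only [hT₁_one, hT₂_one, Prod.map_id])
    (fun g h => by simp only [hT₁_mul, hT₂_mul, Prod.map_comp_map])
    (B₁ ×ˢ B₂) (hB₁.prod hB₂)
    (by rw [Measure.prod_prod]; exact ENNReal.mul_pos hB₁_pos.ne' hB₂_pos.ne')
  rw [Measure.prod_inter_image_prodMap] at hpos
  obtain ⟨hpos₁, hpos₂⟩ := CanonicallyOrderedAdd.mul_pos.mp hpos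
  rcases hg with hg | hg
  · exact (hA g hg hg_ne).not_gt hpos₁
  · exact (hB g hg hg_ne).not_gt hpos₂

lemma IsSetOfRecurrence.exists_of_biUnion {ι : Type*} {s : Finset ι} {Rs : ι → Set G}
    (h : IsSetOfRecurrence G (⋃ i ∈ s, Rs i)) : ∃ i ∈ s, IsSetOfRecurrence G (Rs i) := by
  classical
  induction s using Finset.induction_on with
  | empty => exact (not_isSetOfRecurrence_empty (by simpa using h)).elim
  | insert a s _ ih =>
    rw [Finset.set_biUnion_insert] at h
    rcases h.or_of_union with ha | hs
    · exact ⟨a, Finset.mem_insert_self a s, ha⟩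
    · obtain ⟨i, hi, hRi⟩ := ih hs
      exact ⟨i, Finset.mem_insert_of_mem hi, hRi⟩

lemma IsSetOfRecurrence.exists_of_iUnion {ι : Type*} [Fintype ι] {Rs : ι → Set G}
    (h : IsSetOfRecurrence G (⋃ i, Rs i)) : ∃ i, IsSetOfRecurrence G (Rs i) := by
  obtain ⟨i, -, hi⟩ := IsSetOfRecurrence.exists_of_biUnion (s := Finset.univ) (by simpa using h)
  exact ⟨i, hi⟩

end Recurrence

/-- Sets of recurrence are partition regular: if a set of recurrence is partitioned into
finitely many pieces, one of the pieces is a set of recurrence. -/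
theorem setOfRecurrence_partition_regular {G : Type*} [Group G] (R : Set G)
    (hR : IsSetOfRecurrence G R) (r : ℕ) (Rs : Fin r → Set G)
    (hcover : R = ⋃ i, Rs i) :
    ∃ i, IsSetOfRecurrence G (Rs i) :=
  (hcover ▸ hR).exists_of_iUnion
end

section
/- For any finite field F and subsets E_1, E_2 ⊂ F with |E_1||E_2| > 6|F|, there exist u ∈ F* and y ∈ F such that u + y ∈ E_1 and u·y ∈ E_2. -/
/-!
Let `R s p` be the number of `u` with `u * (s - u) = p`, i.e. of pairs `(u, y)` with `u + y = s` and
`u * y = p`. Each `s` admits only one such pair with `u = 0`, so it suffices to show that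
`∑_{s ∈ E₁, p ∈ E₂} R s p > |F| ≥ |E₁|`. For fixed `s` the values `R s p` average to `1`, and the
deviations `R s p - 1` for `s` and `s'` have non-positive inner product unless `s' = ± s`, since otherwise
`u * (s - u) = v * (s' - v)` has at most `|F|` solutions. Hence `∑_p (∑_{s ∈ E₁} (R s p - 1))² ≤ 2|F||E₁|`,
and Cauchy–Schwarz over `p ∈ E₂` shows that the sum differs from `|E₁||E₂|` by at most
`√(2|F||E₁||E₂|)`, which is less than `|E₁||E₂| - |F|` once `|E₁||E₂| > 6|F|`.
-/

open Finset

lemma Finset.card_le_two_of_forall_eq_or_eq {α : Type*} [DecidableEq α] {s : Finset α} {a b : α}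
    (h : ∀ x ∈ s, x = a ∨ x = b) : #s ≤ 2 :=
  (card_le_card fun x hx => by simpa using h x hx).trans card_le_two

lemma Finset.card_filter_eq_eq_sum_card_mul_card {α β γ : Type*} [Fintype α] [Fintype β]
    [Fintype γ] [DecidableEq γ] (f : α → γ) (g : β → γ) :
    #{xy : α × β | f xy.1 = g xy.2} = ∑ c, #{x | f x = c} * #{y | g y = c} := by
  rw [card_eq_sum_card_fiberwise (f := fun xy : α × β => f xy.1) (fun _ _ => mem_univ _)]
  refine sum_congr rfl fun c _ => ?_
  rw [← card_product, filter_filter]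
  congr 1
  ext ⟨x, y⟩
  simp only [mem_filter, mem_univ, true_and, mem_product]
  constructor
  · rintro ⟨hxy, hc⟩
    exact ⟨hc, hxy ▸ hc⟩
  · rintro ⟨hx, hy⟩
    exact ⟨hx.trans hy.symm, hx⟩

lemma Finset.card_filter_mul_self_eq_le_two {α : Type*} [CommRing α] [NoZeroDivisors α]
    [DecidableEq α] (E : Finset α) (s : α) : #{s' ∈ E | s * s = s' * s'} ≤ 2 := by
  refine card_le_two_of_forall_eq_or_eq (a := s) (b := -s) fun s' hs' => ?_
  have hroot : (s' - s) * (s' - -s) = 0 := by linear_combination -(mem_filter.mp hs').2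
  simpa only [mul_eq_zero, sub_eq_zero] using hroot

section SumProduct

variable {F : Type*} [Field F] [Fintype F] [DecidableEq F]

def sumProdReprCount (s p : F) : ℕ := #{u | u * (s - u) = p}

local notation "R" => sumProdReprCount
local notation "q" => Fintype.card F

lemma sumProdReprCount_le_two (s p : F) : R s p ≤ 2 := by
  rcases (univ.filter fun u : F => u * (s - u) = p).eq_empty_or_nonempty with hempty | ⟨u₀, hu₀⟩
  · simp [sumProdReprCount, hempty]
  · refine card_le_two_of_forall_eq_or_eq (a := u₀) (b := s - u₀) fun u hu => ?_
    rw [mem_filter] at hu hu₀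
    have hroot : (u - u₀) * (u - (s - u₀)) = 0 := by linear_combination hu₀.2 - hu.2
    simpa only [mul_eq_zero, sub_eq_zero] using hroot

lemma sum_sumProdReprCount (s : F) : ∑ p, R s p = q :=
  (card_eq_sum_card_fiberwise fun _ _ => mem_univ _).symm

lemma sum_sumProdReprCount_eq_card_filter (s : F) (E : Finset F) :
    ∑ p ∈ E, R s p = #{u | u * (s - u) ∈ E} :=
  sum_card_fiberwise_eq_card_filter _ _ _

lemma sum_sumProdReprCount_mul_le_two_mul_card (s s' : F) : ∑ p, R s p * R s' p ≤ 2 * q := by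
  calc ∑ p, R s p * R s' p ≤ ∑ p, R s p * 2 :=
        sum_le_sum fun p _ => Nat.mul_le_mul_left _ (sumProdReprCount_le_two s' p)
    _ = 2 * q := by rw [← sum_mul, sum_sumProdReprCount, mul_comm]

/-- Writing `w = u + v`, the equation `u * (s - u) = v * (s' - v)` becomes
`u * (s + s' - 2 * w) = w * (s' - w)`, which determines `u` from `w` unless `s' = ± s`. -/
lemma sum_sumProdReprCount_mul_le_card_of_mul_self_ne {s s' : F} (h : s * s ≠ s' * s') :
    ∑ p, R s p * R s' p ≤ q := by
  simp only [sumProdReprCount]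
  rw [← card_filter_eq_eq_sum_card_mul_card, ← card_univ]
  refine card_le_card_of_injOn (fun uv => uv.1 + uv.2) (fun _ _ => mem_univ _) ?_
  rintro ⟨u₁, v₁⟩ h₁ ⟨u₂, v₂⟩ h₂ (hw : u₁ + v₁ = u₂ + v₂)
  simp only [coe_filter, mem_univ, true_and, Set.mem_ofPred_eq] at h₁ h₂
  set w := u₁ + v₁
  have hdet₁ : u₁ * (s + s' - 2 * w) = w * (s' - w) := by linear_combination h₁
  have hdet₂ : u₂ * (s + s' - 2 * w) = w * (s' - w) := by rw [hw]; linear_combination h₂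
  have hcoeff : s + s' - 2 * w ≠ 0 := by
    intro hzero
    rw [hzero, mul_zero, eq_comm, mul_eq_zero] at hdet₁
    rcases hdet₁ with hw0 | hws'
    · exact h (by linear_combination (s - s') * hzero + 2 * (s - s') * hw0)
    · exact h (by linear_combination (s + s') * hzero - 2 * (s + s') * hws')
  have hu : u₁ = u₂ := mul_right_cancel₀ hcoeff (hdet₁.trans hdet₂.symm)
  subst hu
  exact Prod.ext rfl (add_left_cancel hw)

lemma sum_deviation_mul_deviation_le (s s' : F) :
    ∑ p, ((R s p : ℤ) - 1) * ((R s' p : ℤ) - 1) ≤ if s * s = s' * s' then (q : ℤ) else 0 := by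
  have hexpand : ∑ p, ((R s p : ℤ) - 1) * ((R s' p : ℤ) - 1)
      = ((∑ p, R s p * R s' p : ℕ) : ℤ) - q := by
    have h₁ := sum_sumProdReprCount s
    have h₂ := sum_sumProdReprCount s'
    simp only [mul_sub, sub_mul, mul_one, one_mul, sum_sub_distrib, sum_const, card_univ,
      ← Nat.cast_sum, h₁, h₂, nsmul_eq_mul]
    push_cast
    ring
  rw [hexpand]
  split_ifs with hs
  · have := sum_sumProdReprCount_mul_le_two_mul_card s s'
    omega
  · have := sum_sumProdReprCount_mul_le_card_of_mul_self_ne hs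
    omega

lemma sum_sq_sum_deviation_le (E : Finset F) :
    ∑ p, (∑ s ∈ E, ((R s p : ℤ) - 1)) ^ 2 ≤ 2 * q * #E := by
  calc ∑ p, (∑ s ∈ E, ((R s p : ℤ) - 1)) ^ 2
      = ∑ s ∈ E, ∑ s' ∈ E, ∑ p, ((R s p : ℤ) - 1) * ((R s' p : ℤ) - 1) := by
        simp_rw [sq, sum_mul_sum]
        rw [sum_comm]
        exact sum_congr rfl fun _ _ => sum_comm
    _ ≤ ∑ s ∈ E, ∑ s' ∈ E, if s * s = s' * s' then (q : ℤ) else 0 := by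
        gcongr with s _ s' _
        exact sum_deviation_mul_deviation_le s s'
    _ = ∑ s ∈ E, (#{s' ∈ E | s * s = s' * s'} : ℤ) * q := by
        simp only [← sum_filter, sum_const, nsmul_eq_mul]
    _ ≤ ∑ s ∈ E, 2 * (q : ℤ) := by
        gcongr with s
        exact_mod_cast card_filter_mul_self_eq_le_two E s
    _ = 2 * q * #E := by rw [sum_const, nsmul_eq_mul]; ring

lemma sq_sum_sum_deviation_le (E₁ E₂ : Finset F) :
    (∑ s ∈ E₁, ∑ p ∈ E₂, ((R s p : ℤ) - 1)) ^ 2 ≤ 2 * q * #E₁ * #E₂ := by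
  rw [sum_comm]
  calc _ ≤ #E₂ * ∑ p ∈ E₂, (∑ s ∈ E₁, ((R s p : ℤ) - 1)) ^ 2 := sq_sum_le_card_mul_sum_sq
    _ ≤ #E₂ * ∑ p, (∑ s ∈ E₁, ((R s p : ℤ) - 1)) ^ 2 := by
        gcongr
        exact subset_univ _
    _ ≤ #E₂ * (2 * q * #E₁) := by
        gcongr
        exact sum_sq_sum_deviation_le E₁
    _ = 2 * q * #E₁ * #E₂ := by ring

lemma card_lt_sum_sum_sumProdReprCount {E₁ E₂ : Finset F} (h : 6 * q < #E₁ * #E₂) :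
    q < ∑ s ∈ E₁, ∑ p ∈ E₂, R s p := by
  have hdev := sq_sum_sum_deviation_le E₁ E₂
  set X := ∑ s ∈ E₁, ∑ p ∈ E₂, ((R s p : ℤ) - 1)
  have hsum : ((∑ s ∈ E₁, ∑ p ∈ E₂, R s p : ℕ) : ℤ) = #E₁ * #E₂ + X := by
    simp only [X, sum_sub_distrib, sum_const, nsmul_eq_mul, mul_one, Nat.cast_sum]
    ring
  have h' : 6 * (q : ℤ) < #E₁ * #E₂ := by exact_mod_cast h
  suffices (q : ℤ) < ((∑ s ∈ E₁, ∑ p ∈ E₂, R s p : ℕ) : ℤ) by exact_mod_cast this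
  rw [hsum]
  nlinarith [sq_nonneg (X + #E₁ * #E₂ - q)]

end SumProduct

theorem finite_field_sum_product_general {F : Type*} [Field F] [Fintype F]
    (E₁ E₂ : Finset F) (h : 6 * Fintype.card F < E₁.card * E₂.card) :
    ∃ u y : F, u ≠ 0 ∧ u + y ∈ E₁ ∧ u * y ∈ E₂ := by
  classical
  by_contra! hnone
  have hzero_only (s : F) (hs : s ∈ E₁) : ∑ p ∈ E₂, sumProdReprCount s p ≤ 1 := by
    rw [sum_sumProdReprCount_eq_card_filter]
    refine (card_le_card (t := {0}) fun u hu => ?_).trans (card_singleton 0).le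
    by_contra hu0
    exact hnone u (s - u) (by simpa using hu0) (by simpa using hs) (mem_filter.mp hu).2
  have hcount := card_lt_sum_sum_sumProdReprCount h
  have hle := sum_le_card_nsmul E₁ _ 1 hzero_only
  have hE₁ := card_le_univ E₁
  simp only [smul_eq_mul, mul_one] at hle
  omega

/-- For any finite field `F` and subsets `E₁, E₂ ⊆ F` with `|E₁||E₂| > 6|F|`, there exist
`u ∈ F*` and `y ∈ F` with `u + y ∈ E₁` and `u·y ∈ E₂`. -/
theorem finite_field_sum_product {F : Type*} [Field F] [Fintype F] [DecidableEq F]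
    (E₁ E₂ : Finset F) (h : 6 * Fintype.card F < E₁.card * E₂.card) :
    ∃ u y : F, u ≠ 0 ∧ u + y ∈ E₁ ∧ u * y ∈ E₂ :=
  finite_field_sum_product_general E₁ E₂ h
end

section
/- Let d ∈ ℕ and F a finite field. For every B ⊂ F^d with |B| > √6 · |F|^{d - 1/2} and every α = (α_1,…,α_d) ∈ (F*)^d, there exist y ∈ F^d and u ∈ F* such that both y + u·α (componentwise) and u·y (componentwise scaling) lie in B. -/
/-!
Write `q = |F|`, fix a primitive additive character `ψ` of `F` and put
`S(w) = ∑_{b ∈ B} ψ(w ⬝ᵥ b)`. Counting the pairs `(u, b) ∈ Fˣ × B` with `u b - u² α ∈ B` by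
orthogonality of characters gives `q^d N = ∑_w conj S(w) T(w)`, where
`T(w) = ∑_{u ∈ Fˣ} S(u w) ψ(-u² (w ⬝ᵥ α))`.

On the hyperplane `w ⬝ᵥ α = 0` the phase vanishes; as the hyperplane is stable under scaling,
this part of the sum equals `(q - 1)⁻¹ ∑ |∑_u S(u w)|²`, which is at least `(q - 1) |B|²`
(the term `w = 0`). Off the hyperplane, on each punctured line `{t w₀ : t ∈ Fˣ}` with
`w₀ ⬝ᵥ α = 1`, `T(t w₀)` is a sum in `t⁻¹` with quadratic phases `-r²`; squaring is at most
two-to-one, so Parseval on `F` bounds the mean square of `T` by `2q` times that of `S`.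
Cauchy–Schwarz and Parseval on `F^d` then bound this part by `√(2q) q^d |B|`, which the density
hypothesis makes smaller than the main term. Hence `N > 0`, and `y = b - u α` works.
-/

open Finset ComplexConjugate

namespace VectorRecurrence

theorem sum_norm_sq_sum_mul_eq {W X : Type*} [Fintype W] [AddCommGroup X] [Finite X]
    (e : W → AddChar X ℂ) (he : ∀ z ≠ 0, ∑ w, e w z = 0) (s : Finset X) (f : X → ℂ) :
    ∑ w, ‖∑ x ∈ s, f x * e w x‖ ^ 2 = Fintype.card W * ∑ x ∈ s, ‖f x‖ ^ 2 := by
  classical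
  have horth : ∀ x y, ∑ w, e w (x - y) = if x = y then (Fintype.card W : ℂ) else 0 := by
    intro x y
    split_ifs with hxy
    · simp [hxy]
    · exact he _ (sub_ne_zero.2 hxy)
  apply Complex.ofReal_injective
  push_cast
  calc ∑ w, (‖∑ x ∈ s, f x * e w x‖ : ℂ) ^ 2
      = ∑ w, ∑ x ∈ s, ∑ y ∈ s, f x * conj (f y) * e w (x - y) := by
        refine sum_congr rfl fun w _ => ?_
        rw [← Complex.mul_conj', map_sum, sum_mul_sum]
        refine sum_congr rfl fun x _ => sum_congr rfl fun y _ => ?_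
        rw [map_mul, ← AddChar.map_neg_eq_conj, sub_eq_add_neg, AddChar.map_add_eq_mul]
        ring
    _ = ∑ x ∈ s, ∑ y ∈ s, f x * conj (f y) * ∑ w, e w (x - y) := by
        rw [sum_comm]
        refine sum_congr rfl fun x _ => ?_
        rw [sum_comm]
        simp_rw [mul_sum]
    _ = Fintype.card W * ∑ x ∈ s, (‖f x‖ : ℂ) ^ 2 := by
        simp_rw [horth, mul_ite, mul_zero, sum_ite_eq, mul_sum]
        refine sum_congr rfl fun x hx => ?_
        rw [if_pos hx, Complex.mul_conj']
        ring

theorem sum_smul_eq_sum_of_smul_mem {G V M : Type*} [Group G] [MulAction G V] [AddCommMonoid M]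
    {H : Finset V} (hH : ∀ (a : G), ∀ w ∈ H, a • w ∈ H) (a : G) (g : V → M) :
    ∑ w ∈ H, g (a • w) = ∑ w ∈ H, g w :=
  sum_nbij' (a • ·) (a⁻¹ • ·) (fun w hw => hH a w hw) (fun w hw => hH a⁻¹ w hw)
    (fun w _ => inv_smul_smul a w) (fun w _ => smul_inv_smul a w) fun _ _ => rfl

variable {F : Type*} [Field F] [Fintype F] {ψ : AddChar F ℂ}
variable {ι : Type*} [Fintype ι] [DecidableEq ι]

theorem sum_dotProduct_eq_zero (hψ : ψ.IsPrimitive) {v : ι → F} (hv : v ≠ 0) :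
    ∑ w, ψ (w ⬝ᵥ v) = 0 := by
  obtain ⟨i, hi⟩ := Function.ne_iff.1 hv
  obtain ⟨x, hx⟩ := AddChar.ne_one_iff.1 (hψ hi)
  refine eq_zero_of_mul_eq_self_left hx ?_
  rw [mul_sum]
  exact Fintype.sum_equiv (Equiv.addLeft (Pi.single i x)) _ _ fun w => by
    simp [add_dotProduct, AddChar.map_add_eq_mul, mul_comm]

variable (ψ) in
noncomputable def expSum (B : Finset (ι → F)) (w : ι → F) : ℂ := ∑ b ∈ B, ψ (w ⬝ᵥ b)

theorem sum_norm_expSum_sq (hψ : ψ.IsPrimitive) (B : Finset (ι → F)) :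
    ∑ w, ‖expSum ψ B w‖ ^ 2 = (Fintype.card F : ℝ) ^ Fintype.card ι * #B := by
  have := sum_norm_sq_sum_mul_eq (fun w => ψ.compAddMonoidHom (.mk' (w ⬝ᵥ ·) (dotProduct_add w)))
    (fun _ hz => sum_dotProduct_eq_zero hψ hz) B 1
  simpa [expSum] using this

variable [DecidableEq F]

theorem sum_units_le_sum (g : F → ℝ) (hg : ∀ x, 0 ≤ g x) :
    ∑ t : Fˣ, g t ≤ ∑ x, g x := by
  calc ∑ t : Fˣ, g t = ∑ x ∈ univ.map ⟨Units.val, Units.val_injective⟩, g x := by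
        rw [sum_map]; rfl
    _ ≤ ∑ x, g x := sum_le_sum_of_subset_of_nonneg (subset_univ _) fun x _ _ => hg x

theorem card_filter_neg_sq_eq_le_two (s : F) :
    #{r : Fˣ | -((r : F) ^ 2) = s} ≤ 2 := by
  by_cases hs : ∃ r₀ : Fˣ, -((r₀ : F) ^ 2) = s
  · obtain ⟨r₀, rfl⟩ := hs
    calc #{r : Fˣ | -((r : F) ^ 2) = -((r₀ : F) ^ 2)} ≤ #{r₀, -r₀} := by
          refine card_le_card fun r hr => ?_
          rw [mem_filter, neg_inj, sq_eq_sq_iff_eq_or_eq_neg] at hr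
          rcases hr.2 with h | h
          · simp [Units.ext h]
          · simp [Units.ext (h.trans (Units.val_neg r₀).symm)]
      _ ≤ 2 := card_le_two
  · simp [filter_false_of_mem fun r _ h => hs ⟨r, h⟩]

theorem sum_norm_sq_sum_mul_le_of_card_fiber_le {R : Type*} [Fintype R] (hψ : ψ.IsPrimitive)
    (h : R → F) {k : ℕ} (hk : ∀ s, #{r | h r = s} ≤ k) (f : R → ℂ) :
    ∑ τ : F, ‖∑ r, f r * ψ (τ * h r)‖ ^ 2 ≤ k * Fintype.card F * ∑ r, ‖f r‖ ^ 2 := by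
  have hfiber : ∀ τ, ∑ r, f r * ψ (τ * h r)
      = ∑ s, (∑ r with h r = s, f r) * ψ.mulShift τ s := by
    intro τ
    rw [← sum_fiberwise univ h]
    refine sum_congr rfl fun s _ => ?_
    rw [sum_mul]
    exact sum_congr rfl fun r hr => by rw [(mem_filter.1 hr).2, AddChar.mulShift_apply]
  have hcs : ∀ s, ‖∑ r with h r = s, f r‖ ^ 2 ≤ k * ∑ r with h r = s, ‖f r‖ ^ 2 := fun s =>
    calc ‖∑ r with h r = s, f r‖ ^ 2 ≤ (∑ r with h r = s, ‖f r‖) ^ 2 := by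
          gcongr; exact norm_sum_le _ _
      _ ≤ #{r | h r = s} * ∑ r with h r = s, ‖f r‖ ^ 2 := sq_sum_le_card_mul_sum_sq
      _ ≤ k * ∑ r with h r = s, ‖f r‖ ^ 2 := by
          gcongr
          exact hk s
  have horth : ∀ z ≠ 0, ∑ τ : F, ψ.mulShift τ z = 0 := fun z hz => by
    simpa [AddChar.mulShift_apply, hz] using AddChar.sum_mulShift z hψ
  simp_rw [hfiber, sum_norm_sq_sum_mul_eq (fun τ => ψ.mulShift τ) horth univ]
  calc (Fintype.card F : ℝ) * ∑ s, ‖∑ r with h r = s, f r‖ ^ 2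
      ≤ Fintype.card F * ∑ s, k * ∑ r with h r = s, ‖f r‖ ^ 2 := by gcongr with s; exact hcs s
    _ = k * Fintype.card F * ∑ r, ‖f r‖ ^ 2 := by
        rw [← mul_sum, sum_fiberwise]
        ring

theorem sum_units_norm_sq_twisted_le (hψ : ψ.IsPrimitive) (f : Fˣ → ℂ) :
    ∑ t : Fˣ, ‖∑ u : Fˣ, f (u * t) * ψ (-((u : F) ^ 2 * t))‖ ^ 2
      ≤ 2 * Fintype.card F * ∑ r : Fˣ, ‖f r‖ ^ 2 := by
  set g : F → ℂ := fun τ => ∑ r : Fˣ, f r * ψ (τ * -((r : F) ^ 2))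
  -- Substituting `r = u t` makes the inner sum a function of `t⁻¹` alone.
  have hsubst : ∀ t : Fˣ, ∑ u : Fˣ, f (u * t) * ψ (-((u : F) ^ 2 * t)) = g ↑t⁻¹ := fun t =>
    Fintype.sum_equiv (Equiv.mulRight t) _ (fun r => f r * ψ (↑t⁻¹ * -((r : F) ^ 2))) fun u => by
      simp only [Equiv.coe_mulRight, Units.val_mul, Units.val_inv_eq_inv_val]
      congr 2
      field_simp
  calc ∑ t : Fˣ, ‖∑ u : Fˣ, f (u * t) * ψ (-((u : F) ^ 2 * t))‖ ^ 2
      = ∑ t : Fˣ, ‖g ↑t⁻¹‖ ^ 2 := by simp_rw [hsubst]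
    _ = ∑ t : Fˣ, ‖g t‖ ^ 2 := Fintype.sum_equiv (Equiv.inv Fˣ) _ _ fun _ => rfl
    _ ≤ ∑ τ, ‖g τ‖ ^ 2 := sum_units_le_sum (fun τ => ‖g τ‖ ^ 2) fun _ => sq_nonneg _
    _ ≤ 2 * Fintype.card F * ∑ r : Fˣ, ‖f r‖ ^ 2 := by
        exact_mod_cast sum_norm_sq_sum_mul_le_of_card_fiber_le hψ _ card_filter_neg_sq_eq_le_two f

theorem sum_filter_ne_zero_eq_sum_units_smul {V M : Type*} [AddCommGroup V] [Module F V]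
    [Fintype V] [AddCommMonoid M] {ℓ : V → F}
    (hℓ : ∀ (a : F) w, ℓ (a • w) = a * ℓ w) (g : V → M) :
    ∑ w with ℓ w ≠ 0, g w = ∑ w₀ with ℓ w₀ = 1, ∑ t : Fˣ, g (t • w₀) := by
  rw [← sum_product']
  refine sum_bij' (fun w hw => ((ℓ w)⁻¹ • w, Units.mk0 (ℓ w) (mem_filter.1 hw).2))
    (fun p _ => p.2 • p.1) (fun w hw => ?_) (fun p hp => ?_) (fun w hw => ?_)
    (fun p hp => ?_) (fun w hw => ?_)
  · simp [hℓ, (mem_filter.1 hw).2]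
  · simp_all [Units.smul_def]
  · simp [Units.smul_def, (mem_filter.1 hw).2]
  · rw [mem_product, mem_filter] at hp
    simp [Units.smul_def, hℓ, hp.1.2]
  · simp [Units.smul_def, (mem_filter.1 hw).2]

theorem card_units_mul_sum_conj_mul_sum_units_smul {V : Type*} [AddCommGroup V]
    [Module F V] {H : Finset V} (hH : ∀ (a : Fˣ), ∀ w ∈ H, a • w ∈ H) (f : V → ℂ) :
    (Fintype.card Fˣ : ℂ) * ∑ w ∈ H, conj (f w) * ∑ a : Fˣ, f (a • w)
      = ∑ w ∈ H, (‖∑ a : Fˣ, f (a • w)‖ : ℂ) ^ 2 := by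
  set A : V → ℂ := fun w => ∑ a : Fˣ, f (a • w)
  have hA : ∀ (b : Fˣ) w, A (b • w) = A w := fun b w =>
    Fintype.sum_equiv (Equiv.mulRight b) _ _ fun a => by simp [mul_smul]
  calc (Fintype.card Fˣ : ℂ) * ∑ w ∈ H, conj (f w) * A w
      = ∑ b : Fˣ, ∑ w ∈ H, conj (f (b • w)) * A (b • w) := by
        rw [← nsmul_eq_mul, ← card_univ, ← sum_const]
        exact sum_congr rfl fun b _ =>
          (sum_smul_eq_sum_of_smul_mem hH b fun w => conj (f w) * A w).symm
    _ = ∑ w ∈ H, conj (A w) * A w := by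
        simp_rw [hA, sum_comm (s := univ), ← sum_mul, A, map_sum]
    _ = ∑ w ∈ H, (‖A w‖ : ℂ) ^ 2 := by simp_rw [Complex.conj_mul']

theorem sum_dotProduct_eq_ite (hψ : ψ.IsPrimitive) (v : ι → F) :
    ∑ w, ψ (w ⬝ᵥ v) = if v = 0 then (Fintype.card F : ℂ) ^ Fintype.card ι else 0 := by
  split_ifs with hv
  · simp [hv]
  · exact sum_dotProduct_eq_zero hψ hv

theorem card_filter_smul_sub_mem (hψ : ψ.IsPrimitive) (B : Finset (ι → F))
    (u : F) (c : ι → F) :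
    (Fintype.card F : ℂ) ^ Fintype.card ι * #{b ∈ B | u • b - c ∈ B}
      = ∑ w, conj (expSum ψ B w) * expSum ψ B (u • w) * ψ (-(w ⬝ᵥ c)) := by
  calc (Fintype.card F : ℂ) ^ Fintype.card ι * #{b ∈ B | u • b - c ∈ B}
      = ∑ b ∈ B, ∑ b' ∈ B, ∑ w, ψ (w ⬝ᵥ (u • b - c - b')) := by
        rw [card_filter, Nat.cast_sum, mul_sum]
        refine sum_congr rfl fun b _ => ?_
        simp_rw [sum_dotProduct_eq_ite hψ, sub_eq_zero, sum_ite_eq]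
        split_ifs <;> simp
    _ = ∑ b ∈ B, ∑ b' ∈ B, ∑ w, ψ ((u • w) ⬝ᵥ b) * ψ (-(w ⬝ᵥ c)) * conj (ψ (w ⬝ᵥ b')) := by
        refine sum_congr rfl fun b _ => sum_congr rfl fun b' _ => sum_congr rfl fun w _ => ?_
        rw [← AddChar.map_neg_eq_conj, ← AddChar.map_add_eq_mul, ← AddChar.map_add_eq_mul,
          dotProduct_sub, dotProduct_sub, dotProduct_smul, smul_dotProduct]
        congr 1
        ring
    _ = ∑ w, ∑ b ∈ B, ∑ b' ∈ B, ψ ((u • w) ⬝ᵥ b) * ψ (-(w ⬝ᵥ c)) * conj (ψ (w ⬝ᵥ b')) :=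
        (sum_congr rfl fun _ _ => sum_comm).trans sum_comm
    _ = ∑ w, conj (expSum ψ B w) * expSum ψ B (u • w) * ψ (-(w ⬝ᵥ c)) := by
        refine sum_congr rfl fun w _ => ?_
        simp only [expSum, map_sum, sum_mul, mul_sum]
        refine sum_congr rfl fun b _ => sum_congr rfl fun b' _ => ?_
        ring

variable (ψ) in
noncomputable def twistedSum (B : Finset (ι → F)) (α w : ι → F) : ℂ :=
  ∑ u : Fˣ, expSum ψ B (u • w) * ψ (-((u : F) ^ 2 * (w ⬝ᵥ α)))

theorem card_pow_mul_sum_card_eq_sum_conj_mul_twistedSum (hψ : ψ.IsPrimitive)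
    (B : Finset (ι → F)) (α : ι → F) :
    (Fintype.card F : ℂ) ^ Fintype.card ι * ∑ u : Fˣ, #{b ∈ B | (u : F) • b - (u : F) ^ 2 • α ∈ B}
      = ∑ w, conj (expSum ψ B w) * twistedSum ψ B α w := by
  simp_rw [Nat.cast_sum, mul_sum, card_filter_smul_sub_mem hψ, twistedSum]
  rw [sum_comm]
  refine sum_congr rfl fun w _ => ?_
  rw [mul_sum]
  refine sum_congr rfl fun u _ => ?_
  rw [dotProduct_smul, smul_eq_mul, Units.smul_def]
  ring

theorem sum_norm_sq_twistedSum_le (hψ : ψ.IsPrimitive) (B : Finset (ι → F))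
    (α : ι → F) :
    ∑ w with w ⬝ᵥ α ≠ 0, ‖twistedSum ψ B α w‖ ^ 2
      ≤ 2 * Fintype.card F * ∑ w with w ⬝ᵥ α ≠ 0, ‖expSum ψ B w‖ ^ 2 := by
  have hℓ : ∀ (a : F) (w : ι → F), (a • w) ⬝ᵥ α = a * (w ⬝ᵥ α) := fun a w => smul_dotProduct a w α
  rw [sum_filter_ne_zero_eq_sum_units_smul hℓ, sum_filter_ne_zero_eq_sum_units_smul hℓ, mul_sum]
  refine sum_le_sum fun w₀ hw₀ => ?_
  have hT : ∀ t : Fˣ, twistedSum ψ B α (t • w₀)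
      = ∑ u : Fˣ, expSum ψ B ((u * t) • w₀) * ψ (-((u : F) ^ 2 * t)) := fun t => by
    simp [twistedSum, mul_smul, Units.smul_def, hℓ, (mem_filter.1 hw₀).2]
  simp_rw [hT]
  exact sum_units_norm_sq_twisted_le hψ fun r => expSum ψ B (r • w₀)

theorem norm_sum_conj_mul_twistedSum_le (hψ : ψ.IsPrimitive)
    (B : Finset (ι → F)) (α : ι → F) :
    ‖∑ w with w ⬝ᵥ α ≠ 0, conj (expSum ψ B w) * twistedSum ψ B α w‖
      ≤ √(2 * Fintype.card F) * ((Fintype.card F : ℝ) ^ Fintype.card ι * #B) := by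
  set P := ∑ w with w ⬝ᵥ α ≠ 0, ‖expSum ψ B w‖ ^ 2
  have hP : P ≤ (Fintype.card F : ℝ) ^ Fintype.card ι * #B :=
    (sum_le_sum_of_subset_of_nonneg (filter_subset _ _) fun _ _ _ => sq_nonneg _).trans
      (sum_norm_expSum_sq hψ B).le
  calc ‖∑ w with w ⬝ᵥ α ≠ 0, conj (expSum ψ B w) * twistedSum ψ B α w‖
      ≤ ∑ w with w ⬝ᵥ α ≠ 0, ‖expSum ψ B w‖ * ‖twistedSum ψ B α w‖ :=
        (norm_sum_le _ _).trans_eq (by simp)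
    _ ≤ √P * √(∑ w with w ⬝ᵥ α ≠ 0, ‖twistedSum ψ B α w‖ ^ 2) :=
        Real.sum_mul_le_sqrt_mul_sqrt _ _ _
    _ ≤ √P * √(2 * Fintype.card F * P) := by gcongr; exact sum_norm_sq_twistedSum_le hψ B α
    _ = √(2 * Fintype.card F) * P := by
        rw [Real.sqrt_mul' _ (sum_nonneg fun _ _ => sq_nonneg _), mul_comm, mul_assoc,
          Real.mul_self_sqrt (sum_nonneg fun _ _ => sq_nonneg _)]
    _ ≤ √(2 * Fintype.card F) * ((Fintype.card F : ℝ) ^ Fintype.card ι * #B) := by gcongr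

theorem card_units_mul_card_sq_le_re_sum_conj_mul_twistedSum
    (B : Finset (ι → F)) (α : ι → F) :
    (Fintype.card Fˣ : ℝ) * #B ^ 2
      ≤ (∑ w with w ⬝ᵥ α = 0, conj (expSum ψ B w) * twistedSum ψ B α w).re := by
  set H : Finset (ι → F) := {w | w ⬝ᵥ α = 0}
  set A : (ι → F) → ℂ := fun w => ∑ u : Fˣ, expSum ψ B (u • w)
  have hT : ∀ w ∈ H, conj (expSum ψ B w) * twistedSum ψ B α w = conj (expSum ψ B w) * A w :=
    fun w hw => by simp [twistedSum, A, (mem_filter.1 hw).2]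
  have hH : ∀ (a : Fˣ), ∀ w ∈ H, a • w ∈ H := fun a w hw => by
    simp_all [H, Units.smul_def, smul_dotProduct]
  have hcone : (Fintype.card Fˣ : ℝ) * (∑ w ∈ H, conj (expSum ψ B w) * A w).re
      = ∑ w ∈ H, ‖A w‖ ^ 2 := by
    have := congrArg Complex.re (card_units_mul_sum_conj_mul_sum_units_smul hH (expSum ψ B))
    rw [← Complex.ofReal_natCast, Complex.re_ofReal_mul] at this
    rw [this, Complex.re_sum]
    simp_rw [← Complex.ofReal_pow, Complex.ofReal_re, A]
  have hA0 : ‖A 0‖ = Fintype.card Fˣ * #B := by simp [A, expSum]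
  have hA0_le : ‖A 0‖ ^ 2 ≤ ∑ w ∈ H, ‖A w‖ ^ 2 :=
    single_le_sum (fun w _ => sq_nonneg ‖A w‖) (mem_filter.2 ⟨mem_univ _, zero_dotProduct α⟩)
  have hunits : (0 : ℝ) < Fintype.card Fˣ := by exact_mod_cast Fintype.card_pos
  rw [sum_congr rfl hT]
  rw [hA0, ← hcone] at hA0_le
  nlinarith

theorem exists_smul_sub_sq_smul_mem {B : Finset (ι → F)} (α : ι → F)
    (hB : √(2 * Fintype.card F) * (Fintype.card F : ℝ) ^ Fintype.card ι
      < (Fintype.card F - 1) * #B) :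
    ∃ u : Fˣ, ∃ b ∈ B, (u : F) • b - (u : F) ^ 2 • α ∈ B := by
  set ψ := AddChar.FiniteField.primitiveChar_to_Complex F
  have hψ : ψ.IsPrimitive := AddChar.FiniteField.primitiveChar_to_Complex_isPrimitive F
  by_contra! hnone
  have hzero : ∑ w, conj (expSum ψ B w) * twistedSum ψ B α w = 0 := by
    rw [← card_pow_mul_sum_card_eq_sum_conj_mul_twistedSum hψ]
    simp [filter_false_of_mem fun b hb => hnone _ b hb]
  rw [← sum_filter_add_sum_filter_not univ (fun w => w ⬝ᵥ α = 0)] at hzero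
  set M := ∑ w with w ⬝ᵥ α = 0, conj (expSum ψ B w) * twistedSum ψ B α w
  set E := ∑ w with ¬w ⬝ᵥ α = 0, conj (expSum ψ B w) * twistedSum ψ B α w
  have hcard : (Fintype.card Fˣ : ℝ) = Fintype.card F - 1 := by
    rw [Fintype.card_units, Nat.cast_sub Fintype.card_pos, Nat.cast_one]
  have hmain : (Fintype.card F - 1) * (#B : ℝ) ^ 2 ≤ M.re :=
    hcard ▸ card_units_mul_card_sq_le_re_sum_conj_mul_twistedSum B α
  have herror := (neg_le_abs E.re).trans <|
    (Complex.abs_re_le_norm E).trans (norm_sum_conj_mul_twistedSum_le hψ B α)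
  have hre : M.re + E.re = 0 := by simpa using congrArg Complex.re hzero
  have hBpos : (0 : ℝ) < #B := pos_of_mul_pos_right ((by positivity : (0 : ℝ) ≤ _).trans_lt hB)
    (sub_nonneg.2 (Nat.one_le_cast.2 Fintype.card_pos))
  nlinarith

theorem sqrt_two_mul_mul_pow_lt {q b : ℝ} (d : ℕ) (hq : 0 < q) (hb : b ≤ q ^ d)
    (hB : √6 * q ^ ((d : ℝ) - 1 / 2) < b) : √(2 * q) * q ^ d < (q - 1) * b := by
  have hsq : 0 < √q := Real.sqrt_pos.2 hq
  have hpow : q ^ ((d : ℝ) - 1 / 2) * √q = q ^ d := by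
    rw [Real.sqrt_eq_rpow, ← Real.rpow_add hq]
    norm_num
  have hB' : √6 * q ^ d < b * √q := by
    rw [← hpow, ← mul_assoc]
    exact mul_lt_mul_of_pos_right hB hsq
  have hq6 : 6 < q := by
    have : √6 * q ^ d < √q * q ^ d := by nlinarith
    exact (Real.sqrt_lt_sqrt_iff (by norm_num)).1 (lt_of_mul_lt_mul_right this (by positivity))
  have hsqrt : √2 * q ≤ √6 * (q - 1) := by
    have h6 : 0 ≤ √6 * (q - 1) := mul_nonneg (Real.sqrt_nonneg 6) (by linarith)
    refine (pow_le_pow_iff_left₀ (by positivity) h6 two_ne_zero).1 ?_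
    rw [mul_pow, mul_pow, Real.sq_sqrt (by norm_num), Real.sq_sqrt (by norm_num)]
    nlinarith
  refine lt_of_mul_lt_mul_right ?_ hsq.le
  calc √(2 * q) * q ^ d * √q = √2 * q * q ^ d := by
        rw [Real.sqrt_mul (by norm_num)]
        linear_combination (√2 * q ^ d) * Real.mul_self_sqrt hq.le
    _ ≤ √6 * (q - 1) * q ^ d := by gcongr
    _ < (q - 1) * b * √q := by nlinarith

end VectorRecurrence

theorem finite_field_vector_recurrence_general {F : Type*} [Field F] [Fintype F] [DecidableEq F]
    (d : ℕ) (B : Finset (Fin d → F))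
    (hB : Real.sqrt 6 * (Fintype.card F : ℝ) ^ ((d : ℝ) - 1 / 2) < (B.card : ℝ))
    (α : Fin d → F) :
    ∃ (y : Fin d → F) (u : F), u ≠ 0 ∧
      (fun i => y i + u * α i) ∈ B ∧ (fun i => u * y i) ∈ B := by
  have hBle : (#B : ℝ) ≤ (Fintype.card F : ℝ) ^ d := by
    exact_mod_cast (card_le_univ B).trans_eq (by simp)
  obtain ⟨u, b, hb, hub⟩ := VectorRecurrence.exists_smul_sub_sq_smul_mem α (by
    simpa using VectorRecurrence.sqrt_two_mul_mul_pow_lt d (by positivity) hBle hB)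
  refine ⟨b - (u : F) • α, u, u.ne_zero, ?_, ?_⟩
  · convert hb using 1
    ext i
    simp
  · convert hub using 1
    ext i
    simp only [Pi.sub_apply, Pi.smul_apply, smul_eq_mul]
    ring

/-- For a finite field `F`, `d ∈ ℕ`, any `B ⊆ F^d` with `|B| > √6 · |F|^(d - 1/2)` and any
`α ∈ (F*)^d`, there exist `y ∈ F^d` and `u ∈ F*` such that `y + u·α` and `u·y`
(componentwise) both lie in `B`. -/
theorem finite_field_vector_recurrence {F : Type*} [Field F] [Fintype F] [DecidableEq F]
    (d : ℕ) (B : Finset (Fin d → F))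
    (hB : Real.sqrt 6 * (Fintype.card F : ℝ) ^ ((d : ℝ) - 1 / 2) < (B.card : ℝ))
    (α : Fin d → F) (hα : ∀ i, α i ≠ 0) :
    ∃ (y : Fin d → F) (u : F), u ≠ 0 ∧
      (fun i => y i + u * α i) ∈ B ∧ (fun i => u * y i) ∈ B :=
  finite_field_vector_recurrence_general d B hB α
end

section
/- In any abelian group G admitting a non-principal character χ: G → ℝ/ℤ, the set E = {g ∈ G : χ(g) ∈ [1/3, 2/3)} is syndetic but contains no triple of the form {u, y, y + u} with u, y ∈ G. -/
/-!
The arc `[1/3, 2/3)` of `ℝ/ℤ` is sum-free: two of its points add up to a point of `[2/3, 4/3)`,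
which does not meet `[1/3, 2/3) + ℤ`. For syndeticity, some multiple `n • χ g` is a point `θ` with
`0 < θ ≤ 1/3`, unless `χ` takes only the values `0` and `1/2`; in the first case the multiples
`k • θ`, `k ≤ ⌈1/θ⌉`, advance in steps no longer than the arc, so one of them moves any given
point into it.
-/

open Set

def middleThird : Set (AddCircle (1 : ℝ)) := {x | ∃ r ∈ Ico (1/3 : ℝ) (2/3), x = r}

theorem add_notMem_middleThird {x y : AddCircle (1 : ℝ)} (hx : x ∈ middleThird)
    (hy : y ∈ middleThird) : x + y ∉ middleThird := by
  rintro ⟨t, ht, hxy⟩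
  obtain ⟨r, hr, rfl⟩ := hx
  obtain ⟨s, hs, rfl⟩ := hy
  have hrs : r + s = t := by
    refine (AddCircle.coe_eq_coe_iff_of_mem_Ico (a := 1/3) ?_ ?_).1 (by rwa [AddCircle.coe_add])
    · constructor <;> linarith [hr.1, hr.2, hs.1, hs.2]
    · constructor <;> linarith [ht.1, ht.2]
  linarith [hr.1, hs.1, ht.2]

theorem AddCircle.exists_nsmul_add_mem_Ico {p : ℝ} [Fact (0 < p)] {a b θ : ℝ} (hθ : 0 < θ)
    (hθab : θ ≤ b - a) (x : AddCircle p) :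
    ∃ k ≤ ⌈p / θ⌉₊, ∃ r ∈ Ico a b, x + k • (θ : AddCircle p) = r := by
  obtain ⟨c, hc, rfl⟩ : ∃ c ∈ Ico (a - p) (a - p + p), (c : AddCircle p) = x := by
    rw [← mem_image, AddCircle.coe_image_Ico_eq]; trivial
  set k := ⌈(a - c) / θ⌉₊
  have hk_ge : a - c ≤ k * θ := (div_le_iff₀ hθ).1 (Nat.le_ceil _)
  have hk_lt : k * θ < a - c + θ := by
    have := Nat.ceil_lt_add_one (div_nonneg (by linarith [hc.2]) hθ.le : 0 ≤ (a - c) / θ)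
    rw [div_add_one hθ.ne', lt_div_iff₀ hθ] at this
    linarith
  refine ⟨k, Nat.ceil_mono (div_le_div_of_nonneg_right (by linarith [hc.1]) hθ.le),
    c + k * θ, ⟨by linarith, by linarith⟩, ?_⟩
  rw [AddCircle.coe_add, ← nsmul_eq_mul, AddCircle.coe_nsmul]

theorem AddCircle.eq_zero_or_eq_half_or_exists_zsmul_mem_Ioc (x : AddCircle (1 : ℝ)) :
    x = 0 ∨ x = ((1/2 : ℝ) : AddCircle (1 : ℝ)) ∨
      ∃ n : ℤ, ∃ θ ∈ Ioc (0 : ℝ) (1/3), n • x = θ := by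
  obtain ⟨t, ht, rfl⟩ : ∃ t ∈ Ico (0 : ℝ) (0 + 1), (t : AddCircle (1 : ℝ)) = x := by
    rw [← mem_image, AddCircle.coe_image_Ico_eq]; trivial
  have hzsmul (n m : ℤ) : n • (t : AddCircle (1 : ℝ)) = ((n * t + m : ℝ) : AddCircle (1 : ℝ)) := by
    have hm : ((m : ℝ) : AddCircle (1 : ℝ)) = 0 := (AddCircle.coe_eq_zero_iff 1).2 ⟨m, by simp⟩
    rw [AddCircle.coe_add, ← zsmul_eq_mul, AddCircle.coe_zsmul, hm, add_zero]
  obtain ⟨ht0, ht1⟩ := ht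
  rcases ht0.eq_or_lt with rfl | ht0
  · simp
  rcases le_or_gt t (1/3) with h1 | h1
  · exact Or.inr <| Or.inr ⟨1, t, ⟨ht0, h1⟩, by simp⟩
  rcases lt_trichotomy t (1/2) with h2 | rfl | h2
  · refine Or.inr <| Or.inr ⟨-2, -2 * t + 1, ⟨by linarith, by linarith⟩, ?_⟩
    exact_mod_cast hzsmul (-2) 1
  · exact Or.inr (Or.inl rfl)
  rcases lt_or_ge t (2/3) with h3 | h3
  · refine Or.inr <| Or.inr ⟨2, 2 * t + -1, ⟨by linarith, by linarith⟩, ?_⟩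
    exact_mod_cast hzsmul 2 (-1)
  · refine Or.inr <| Or.inr ⟨-1, -1 * t + 1, ⟨by linarith, by linarith⟩, ?_⟩
    exact_mod_cast hzsmul (-1) 1

section Syndetic

variable {G : Type*} [AddCommGroup G] (χ : G →+ AddCircle (1 : ℝ))

theorem exists_finset_add_mem_middleThird_of_eq_coe {g : G} {θ : ℝ} (hθ : θ ∈ Ioc (0 : ℝ) (1/3))
    (hg : χ g = θ) : ∃ S : Finset G, ∀ x : G, ∃ s ∈ S, χ (s + x) ∈ middleThird := by
  classical
  refine ⟨(Finset.range (⌈1 / θ⌉₊ + 1)).image (· • g), fun x => ?_⟩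
  obtain ⟨k, hk, r, hr, hkr⟩ :=
    AddCircle.exists_nsmul_add_mem_Ico hθ.1 (by linarith [hθ.2]) (χ x) (a := 1/3) (b := 2/3)
  refine ⟨k • g, Finset.mem_image_of_mem _ (Finset.mem_range.2 (Nat.lt_succ_of_le hk)), r, hr, ?_⟩
  rw [map_add, map_nsmul, hg, add_comm, hkr]

theorem exists_finset_add_mem_middleThird_of_two_valued (hχ : χ ≠ 0)
    (h : ∀ g, χ g = 0 ∨ χ g = ((1/2 : ℝ) : AddCircle (1 : ℝ))) :
    ∃ S : Finset G, ∀ x : G, ∃ s ∈ S, χ (s + x) ∈ middleThird := by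
  classical
  obtain ⟨g, hg⟩ : ∃ g, χ g ≠ 0 := by simpa [DFunLike.ne_iff] using hχ
  have hhalf : ((1/2 : ℝ) : AddCircle (1 : ℝ)) ∈ middleThird := ⟨1/2, by norm_num, rfl⟩
  refine ⟨{0, g}, fun x => ?_⟩
  rcases h x with hx | hx
  · exact ⟨g, by simp, by rwa [map_add, hx, add_zero, (h g).resolve_left hg]⟩
  · exact ⟨0, by simp, by rwa [zero_add, hx]⟩

theorem exists_finset_add_mem_middleThird (hχ : χ ≠ 0) :
    ∃ S : Finset G, ∀ x : G, ∃ s ∈ S, χ (s + x) ∈ middleThird := by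
  by_cases hsmall : ∃ g, ∃ θ ∈ Ioc (0 : ℝ) (1/3), χ g = θ
  · obtain ⟨g, θ, hθ, hg⟩ := hsmall
    exact exists_finset_add_mem_middleThird_of_eq_coe χ hθ hg
  refine exists_finset_add_mem_middleThird_of_two_valued χ hχ fun g => ?_
  obtain h | h | ⟨n, θ, hθ, hn⟩ := AddCircle.eq_zero_or_eq_half_or_exists_zsmul_mem_Ioc (χ g)
  · exact Or.inl h
  · exact Or.inr h
  · exact absurd ⟨n • g, θ, hθ, by rw [map_zsmul, hn]⟩ hsmall

end Syndetic

/-- In any abelian group `G` admitting a non-principal character `χ : G → ℝ/ℤ`, the set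
`E = {g : χ(g) ∈ [1/3, 2/3)}` is syndetic (finitely many translates of `E` cover `G`),
but `E` contains no triple of the form `{u, y, y + u}`. -/
theorem syndetic_no_schur_triple {G : Type*} [AddCommGroup G]
    (χ : G →+ AddCircle (1 : ℝ)) (hχ : χ ≠ 0) :
    (∃ S : Finset G, ∀ g : G, ∃ s ∈ S,
      s + g ∈ {g : G | ∃ r : ℝ, r ∈ Set.Ico (1/3 : ℝ) (2/3) ∧ χ g = (r : AddCircle (1 : ℝ))}) ∧
    ∀ u y : G, ¬ (u ∈ {g : G | ∃ r : ℝ, r ∈ Set.Ico (1/3 : ℝ) (2/3) ∧ χ g = (r : AddCircle (1 : ℝ))} ∧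
      y ∈ {g : G | ∃ r : ℝ, r ∈ Set.Ico (1/3 : ℝ) (2/3) ∧ χ g = (r : AddCircle (1 : ℝ))} ∧
      y + u ∈ {g : G | ∃ r : ℝ, r ∈ Set.Ico (1/3 : ℝ) (2/3) ∧ χ g = (r : AddCircle (1 : ℝ))}) :=
  ⟨exists_finset_add_mem_middleThird χ hχ, fun u y ⟨hu, hy, hyu⟩ =>
    add_notMem_middleThird (x := χ y) (y := χ u) hy hu (map_add χ y u ▸ hyu)⟩
end
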